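/- arXiv:2303.04798 — 7 statements merged into one kernel-verified Lean document; each statement's English description precedes it below -/
import Mathlib

section
/- If Pr₁ and Pr₂ are two independent locally decaying probability distributions on subsets of [n] with rates p₁ and p₂ respectively (meaning the total probability that a random set contains E is at most pᵢ^|E|), then the distribution of the union of two independent samples is locally decaying with rate p₁ + p₂; that is, for all E ⊆ [n], the probability that the union contains E is at most (p₁ + p₂)^|E|. -/
open Finset

/-- If `P₁` and `P₂` are two independent locally decaying probability
distributions on subsets of `[n]` with rates `p₁` and `p₂` (the total probability that a
random set contains `E` is at most `pᵢ ^ |E|`), then the distribution of the union of two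
independent samples is locally decaying with rate `p₁ + p₂`. -/
theorem stmt_0 (n : ℕ) (P₁ P₂ : Finset (Fin n) → ℝ) (p₁ p₂ : ℝ)
    (hP₁ : ∀ E, 0 ≤ P₁ E) (hP₂ : ∀ E, 0 ≤ P₂ E)
    (hsum₁ : ∑ E, P₁ E = 1) (hsum₂ : ∑ E, P₂ E = 1)
    (hp₁ : 0 ≤ p₁) (hp₂ : 0 ≤ p₂)
    (hld₁ : ∀ E : Finset (Fin n),
      ∑ E' ∈ univ.filter (fun E' => E ⊆ E'), P₁ E' ≤ p₁ ^ E.card)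
    (hld₂ : ∀ E : Finset (Fin n),
      ∑ E' ∈ univ.filter (fun E' => E ⊆ E'), P₂ E' ≤ p₂ ^ E.card) :
    ∀ E : Finset (Fin n),
      ∑ E₁, ∑ E₂, (if E ⊆ E₁ ∪ E₂ then P₁ E₁ * P₂ E₂ else 0) ≤ (p₁ + p₂) ^ E.card := by
  intro E
  have hnn : ∀ (S E₁ E₂ : Finset (Fin n)),
      (0:ℝ) ≤ (if S ⊆ E₁ then P₁ E₁ else 0) * (if E \ S ⊆ E₂ then P₂ E₂ else 0) := by
    intro S E₁ E₂
    apply mul_nonneg <;> split_ifs <;> first | exact hP₁ _ | exact hP₂ _ | exact le_refl 0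
  have key : ∀ E₁ E₂ : Finset (Fin n), (if E ⊆ E₁ ∪ E₂ then P₁ E₁ * P₂ E₂ else 0) ≤
      ∑ S ∈ E.powerset, (if S ⊆ E₁ then P₁ E₁ else 0) * (if E \ S ⊆ E₂ then P₂ E₂ else 0) := by
    intro E₁ E₂
    split_ifs with h
    · have hmem : E ∩ E₁ ∈ E.powerset := Finset.mem_powerset.2 Finset.inter_subset_left
      have heq : P₁ E₁ * P₂ E₂ =
          (if E ∩ E₁ ⊆ E₁ then P₁ E₁ else 0) * (if E \ (E ∩ E₁) ⊆ E₂ then P₂ E₂ else 0) := by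
        rw [if_pos Finset.inter_subset_right, if_pos ?_]
        intro x hx
        simp only [Finset.mem_sdiff, Finset.mem_inter] at hx
        rcases Finset.mem_union.1 (h hx.1) with h1 | h2
        · exact absurd ⟨hx.1, h1⟩ hx.2
        · exact h2
      rw [heq]
      exact Finset.single_le_sum (fun S _ => hnn S E₁ E₂) hmem
    · exact Finset.sum_nonneg fun S _ => hnn S E₁ E₂
  calc ∑ E₁, ∑ E₂, (if E ⊆ E₁ ∪ E₂ then P₁ E₁ * P₂ E₂ else 0)
      ≤ ∑ E₁, ∑ E₂, ∑ S ∈ E.powerset,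
          (if S ⊆ E₁ then P₁ E₁ else 0) * (if E \ S ⊆ E₂ then P₂ E₂ else 0) :=
        Finset.sum_le_sum fun E₁ _ => Finset.sum_le_sum fun E₂ _ => key E₁ E₂
    _ = ∑ S ∈ E.powerset,
          (∑ E₁, if S ⊆ E₁ then P₁ E₁ else 0) * (∑ E₂, if E \ S ⊆ E₂ then P₂ E₂ else 0) := by
        have h1 : (∑ E₁, ∑ E₂, ∑ S ∈ E.powerset,
            (if S ⊆ E₁ then P₁ E₁ else 0) * (if E \ S ⊆ E₂ then P₂ E₂ else 0)) =
            ∑ E₁, ∑ S ∈ E.powerset, ∑ E₂,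
            (if S ⊆ E₁ then P₁ E₁ else 0) * (if E \ S ⊆ E₂ then P₂ E₂ else 0) :=
          Finset.sum_congr rfl fun E₁ _ => Finset.sum_comm
        rw [h1, Finset.sum_comm]
        refine Finset.sum_congr rfl fun S _ => ?_
        rw [Finset.sum_mul_sum]
    _ ≤ ∑ S ∈ E.powerset, p₁ ^ S.card * p₂ ^ (E \ S).card := by
        refine Finset.sum_le_sum fun S _ => ?_
        have h1 : (∑ E₁, if S ⊆ E₁ then P₁ E₁ else 0) ≤ p₁ ^ S.card := by
          rw [← Finset.sum_filter]; exact hld₁ S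
        have h2 : (∑ E₂, if E \ S ⊆ E₂ then P₂ E₂ else 0) ≤ p₂ ^ (E \ S).card := by
          rw [← Finset.sum_filter]; exact hld₂ (E \ S)
        have h1n : (0:ℝ) ≤ ∑ E₁, if S ⊆ E₁ then P₁ E₁ else 0 :=
          Finset.sum_nonneg fun E₁ _ => by split_ifs; exacts [hP₁ _, le_refl 0]
        have h2n : (0:ℝ) ≤ ∑ E₂, if E \ S ⊆ E₂ then P₂ E₂ else 0 :=
          Finset.sum_nonneg fun E₂ _ => by split_ifs; exacts [hP₂ _, le_refl 0]
        exact mul_le_mul h1 h2 h2n (pow_nonneg hp₁ _)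
    _ = (p₁ + p₂) ^ E.card := by
        have := Finset.prod_add (fun _ : Fin n => p₁) (fun _ : Fin n => p₂) E
        simp only [Finset.prod_const] at this
        rw [← this]
end

section
/- Let e ∈ F₂ⁿ be a random binary vector whose support is distributed according to a locally decaying distribution with rate p, and let M ∈ F₂^{m×n} be a matrix with row and column weight at most Δ. Then the support of f = M·e is distributed according to a locally decaying distribution with rate 2^Δ · p^{1/Δ}. -/
open Finset

/-- The support of a binary vector: the set of its nonzero coordinates. -/
def vsupp {n : ℕ} (e : Fin n → ZMod 2) : Finset (Fin n) :=
  univ.filter (fun i => e i ≠ 0)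

private lemma sum_biUnion_le' {α β : Type*} [DecidableEq α] [DecidableEq β] (s : Finset α)
    (t : α → Finset β) (f : β → ℝ) (hf : ∀ b, 0 ≤ f b) :
    ∑ b ∈ s.biUnion t, f b ≤ ∑ a ∈ s, ∑ b ∈ t a, f b := by
  induction s using Finset.induction_on with
  | empty => simp
  | @insert a s ha ih =>
    rw [Finset.biUnion_insert, Finset.sum_insert ha]
    have h1 : 0 ≤ ∑ b ∈ t a ∩ s.biUnion t, f b := Finset.sum_nonneg fun b _ => hf b
    have h2 := Finset.sum_union_inter (s₁ := t a) (s₂ := s.biUnion t) (f := f)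
    linarith

/-- If `e ∈ F₂ⁿ` is a random binary vector whose support is locally
decaying with rate `p`, and `M ∈ F₂^{m×n}` has row and column weight at most `Δ`, then the
support of `f = M·e` is locally decaying with rate `2^Δ · p^{1/Δ}`. -/
theorem stmt_1 (n m Δ : ℕ) (hΔ : 0 < Δ) (p : ℝ) (hp : 0 ≤ p) (hp1 : p ≤ 1)
    (μ : (Fin n → ZMod 2) → ℝ) (hμ : ∀ e, 0 ≤ μ e) (hsum : ∑ e, μ e = 1)
    (M : Matrix (Fin m) (Fin n) (ZMod 2))
    (hrow : ∀ i, (univ.filter (fun j => M i j ≠ 0)).card ≤ Δ)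
    (hcol : ∀ j, (univ.filter (fun i => M i j ≠ 0)).card ≤ Δ)
    (hld : ∀ E : Finset (Fin n), ∑ e ∈ univ.filter (fun e => E ⊆ vsupp e), μ e ≤ p ^ E.card) :
    ∀ F : Finset (Fin m),
      ∑ e ∈ univ.filter (fun e => F ⊆ vsupp (M.mulVec e)), μ e
        ≤ ((2 : ℝ) ^ Δ * p ^ ((1 : ℝ) / (Δ : ℝ))) ^ F.card := by
  intro F
  rcases F.eq_empty_or_nonempty with rfl | hF
  · simpa using le_of_eq hsum
  -- Setup
  set U : Finset (Fin n) := F.biUnion (fun i => univ.filter (fun j => M i j ≠ 0)) with hU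
  set k : ℕ := (F.card + Δ - 1) / Δ with hk
  have hkle : ∀ t : ℕ, F.card ≤ Δ * t → k ≤ t := by
    intro t ht
    rw [hk, Nat.div_le_iff_le_mul_add_pred hΔ]
    omega
  have hΔk : F.card ≤ Δ * k := by
    have h := (Nat.div_le_iff_le_mul_add_pred hΔ).mp (le_of_eq hk.symm)
    omega
  have hk1 : 1 ≤ k := by
    rcases Nat.eq_zero_or_pos k with h0 | h
    · rw [h0, mul_zero] at hΔk
      have := hF.card_pos
      omega
    · exact h
  -- Counting: F ⊆ supp(Me) forces |supp(e) ∩ U| ≥ k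
  have hcount : ∀ e : Fin n → ZMod 2, F ⊆ vsupp (M.mulVec e) →
      k ≤ (vsupp e ∩ U).card := by
    intro e he
    apply hkle
    have hsub : F ⊆ (vsupp e ∩ U).biUnion (fun j => F.filter (fun i => M i j ≠ 0)) := by
      intro i hi
      have hne : M.mulVec e i ≠ 0 := by
        have := he hi
        simpa [vsupp] using this
      have hex : ∃ j, M i j * e j ≠ 0 := by
        by_contra hno
        push_neg at hno
        apply hne
        simp only [Matrix.mulVec, dotProduct]
        exact Finset.sum_eq_zero (fun j _ => hno j)
      obtain ⟨j, hj⟩ := hex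
      have hMij : M i j ≠ 0 := fun h => hj (by simp [h])
      have hej : e j ≠ 0 := fun h => hj (by simp [h])
      refine Finset.mem_biUnion.mpr ⟨j, Finset.mem_inter.mpr ⟨?_, ?_⟩, ?_⟩
      · simp [vsupp, hej]
      · exact Finset.mem_biUnion.mpr ⟨i, hi, by simp [hMij]⟩
      · simp [hi, hMij]
    calc F.card ≤ ((vsupp e ∩ U).biUnion (fun j => F.filter (fun i => M i j ≠ 0))).card :=
          Finset.card_le_card hsub
      _ ≤ ∑ j ∈ vsupp e ∩ U, (F.filter (fun i => M i j ≠ 0)).card := Finset.card_biUnion_le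
      _ ≤ ∑ _j ∈ vsupp e ∩ U, Δ := Finset.sum_le_sum (fun j _ => by
          refine le_trans (Finset.card_le_card ?_) (hcol j)
          intro i hi
          simp only [Finset.mem_filter] at hi ⊢
          exact ⟨Finset.mem_univ i, hi.2⟩)
      _ = Δ * (vsupp e ∩ U).card := by rw [Finset.sum_const, smul_eq_mul, mul_comm]
  -- Union bound
  have hstep1 : ∑ e ∈ univ.filter (fun e => F ⊆ vsupp (M.mulVec e)), μ e
      ≤ ∑ E ∈ U.powersetCard k, ∑ e ∈ univ.filter (fun e => E ⊆ vsupp e), μ e := by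
    refine le_trans (Finset.sum_le_sum_of_subset_of_nonneg ?_ (fun e _ _ => hμ e))
      (sum_biUnion_le' _ _ μ hμ)
    intro e he
    simp only [Finset.mem_filter, Finset.mem_univ, true_and] at he
    obtain ⟨E, hEsub, hEcard⟩ := Finset.exists_subset_card_eq (hcount e he)
    refine Finset.mem_biUnion.mpr ⟨E, ?_, ?_⟩
    · exact Finset.mem_powersetCard.mpr ⟨hEsub.trans Finset.inter_subset_right, hEcard⟩
    · simp only [Finset.mem_filter, Finset.mem_univ, true_and]
      exact fun x hx => (Finset.mem_inter.mp (hEsub hx)).1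
  have hstep2 : ∑ E ∈ U.powersetCard k, ∑ e ∈ univ.filter (fun e => E ⊆ vsupp e), μ e
      ≤ (U.card.choose k : ℝ) * p ^ k := by
    calc ∑ E ∈ U.powersetCard k, ∑ e ∈ univ.filter (fun e => E ⊆ vsupp e), μ e
        ≤ ∑ _E ∈ U.powersetCard k, p ^ k := by
          refine Finset.sum_le_sum (fun E hE => ?_)
          have h := hld E
          rwa [(Finset.mem_powersetCard.mp hE).2] at h
      _ = (U.card.choose k : ℝ) * p ^ k := by
          rw [Finset.sum_const, Finset.card_powersetCard, nsmul_eq_mul]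
  -- size of U
  have hUcard : U.card ≤ Δ * F.card := by
    rw [mul_comm]
    exact Finset.card_biUnion_le_card_mul _ _ _ (fun i _ => hrow i)
  have hchoose : (U.card.choose k : ℝ) ≤ (2 : ℝ) ^ (Δ * F.card) := by
    have h1 : U.card.choose k ≤ 2 ^ U.card := by
      rcases le_or_gt k U.card with h | h
      · calc U.card.choose k ≤ ∑ i ∈ Finset.range (U.card + 1), U.card.choose i :=
              Finset.single_le_sum (fun i _ => Nat.zero_le _)
                (Finset.mem_range.mpr (by omega))
          _ = 2 ^ U.card := Nat.sum_range_choose U.card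
      · rw [Nat.choose_eq_zero_of_lt h]; positivity
    have h2 : (2 : ℕ) ^ U.card ≤ 2 ^ (Δ * F.card) := Nat.pow_le_pow_right (by norm_num) hUcard
    calc (U.card.choose k : ℝ) ≤ ((2 ^ (Δ * F.card) : ℕ) : ℝ) := by exact_mod_cast le_trans h1 h2
      _ = (2 : ℝ) ^ (Δ * F.card) := by push_cast; ring
  have hpk : p ^ k ≤ p ^ ((F.card : ℝ) / (Δ : ℝ)) := by
    rcases eq_or_lt_of_le hp with hp0 | hp0
    · rw [← hp0, zero_pow (by omega), Real.zero_rpow]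
      positivity
    · rw [← Real.rpow_natCast p k]
      apply Real.rpow_le_rpow_of_exponent_ge hp0 hp1
      rw [div_le_iff₀ (by exact_mod_cast hΔ)]
      exact_mod_cast (by rw [mul_comm]; exact hΔk : F.card ≤ k * Δ)
  have hRHS : ((2 : ℝ) ^ Δ * p ^ ((1 : ℝ) / (Δ : ℝ))) ^ F.card
      = (2 : ℝ) ^ (Δ * F.card) * p ^ ((F.card : ℝ) / (Δ : ℝ)) := by
    rw [mul_pow, ← pow_mul, ← Real.rpow_natCast (p ^ ((1 : ℝ) / (Δ : ℝ))) F.card,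
      ← Real.rpow_mul hp]
    congr 1
    field_simp
  rw [hRHS]
  calc ∑ e ∈ univ.filter (fun e => F ⊆ vsupp (M.mulVec e)), μ e
      ≤ (U.card.choose k : ℝ) * p ^ k := le_trans hstep1 hstep2
    _ ≤ (2 : ℝ) ^ (Δ * F.card) * p ^ ((F.card : ℝ) / (Δ : ℝ)) := by
        apply mul_le_mul hchoose hpk (by positivity) (by positivity)
end

section
/- Let G₁ = (V₁, E₁) and G₂ = (V₂, E₂) be graphs on which every permutation can be routed in depth at most D₁ and D₂ respectively. Then every permutation on the Cartesian product graph G₁ × G₂ can be routed in depth at most 2·D₁ + D₂. Specifically, any permutation α on V₁ × V₂ factors as α = α₁ ∘ α₂ ∘ α₁' where α₁, α₁' are column permutations (preserving each fiber V₁ × {u₂}... i.e., permutations acting only within copies of G₁) and α₂ is a row permutation (acting only within copies of G₂). -/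
/-- A *simple permutation* on a graph `G`: a product of transpositions along pairwise
vertex-disjoint edges of `G`. -/
def IsSimplePerm {V : Type*} (G : SimpleGraph V) (β : Equiv.Perm V) : Prop :=
  ∀ v, β v = v ∨ (β (β v) = v ∧ G.Adj v (β v))

/-- `CanRoute G D`: every permutation on the vertices of `G` can be written as a product of
at most `D` simple permutations. -/
def CanRoute {V : Type*} (G : SimpleGraph V) (D : ℕ) : Prop :=
  ∀ σ : Equiv.Perm V, ∃ l : List (Equiv.Perm V),
    l.length ≤ D ∧ (∀ β ∈ l, IsSimplePerm G β) ∧ l.prod = σ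

/-!
View `α` as a bipartite multigraph on two copies of `V₂`: every `x : V₁ × V₂` is an edge from
the column `x.2` to the column `(α x).2`. It is `|V₁|`-regular, so by König's theorem (Hall's
theorem, applied repeatedly) its edges can be coloured by `ρ : V₁ × V₂ → V₁` with distinct colours
at every vertex. Then `e₁ x = (ρ x, x.2)` and `e₂ x = (ρ x, (α x).2)` are permutations,
`α = (α e₂⁻¹) (e₂ e₁⁻¹) e₁`, the outer factors preserve columns and the middle one preserves rows.
A column permutation is routed in depth `D₁` by routing all copies of `G₁` in parallel, and
likewise for rows.
-/

open Finset

section EdgeColouring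

variable {X W : Type*} [DecidableEq W]

lemma card_filter_mem_eq_mul {S : Finset X} {f : X → W} {k : ℕ}
    (hf : ∀ w, #{x ∈ S | f x = w} = k) (s : Finset W) : #{x ∈ S | f x ∈ s} = #s * k := by
  rw [← sum_card_fiberwise_eq_card_filter, sum_const_nat fun w _ => hf w]

lemma card_filter_sdiff [DecidableEq X] {S T : Finset X} (hTS : T ⊆ S) (p : X → Prop)
    [DecidablePred p] :
    #{x ∈ S \ T | p x} = #{x ∈ S | p x} - #{x ∈ T | p x} := by
  rw [← card_sdiff_of_subset (filter_subset_filter p hTS)]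
  congr 1
  ext x
  simp only [mem_filter, mem_sdiff]
  tauto

lemma card_filter_image_eq_one [DecidableEq X] [Fintype W] {p : W → X} {φ : X → W}
    (hp : Function.Bijective (φ ∘ p)) (w : W) : #{x ∈ univ.image p | φ x = w} = 1 := by
  obtain ⟨u, rfl⟩ := hp.2 w
  refine card_eq_one.mpr ⟨p u, ?_⟩
  ext x
  simp only [mem_filter, mem_image, mem_univ, true_and, mem_singleton]
  constructor
  · rintro ⟨⟨v, rfl⟩, hv⟩
    rw [hp.1 hv]
  · rintro rfl
    exact ⟨⟨u, rfl⟩, rfl⟩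

/-- A `(k+1)`-regular bipartite multigraph, with edge set `S` and endpoint maps `f` and `g`,
has a perfect matching `T`. -/
lemma exists_perfect_matching [DecidableEq X] [Fintype W] {S : Finset X} {f g : X → W} {k : ℕ}
    (hf : ∀ w, #{x ∈ S | f x = w} = k + 1) (hg : ∀ w, #{x ∈ S | g x = w} = k + 1) :
    ∃ T ⊆ S, (∀ w, #{x ∈ T | f x = w} = 1) ∧ (∀ w, #{x ∈ T | g x = w} = 1) := by
  let t : W → Finset W := fun w => image g {x ∈ S | f x = w}
  have hall : ∀ s : Finset W, #s ≤ #(s.biUnion t) := by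
    intro s
    have hsub : {x ∈ S | f x ∈ s} ⊆ {x ∈ S | g x ∈ s.biUnion t} := by
      intro x hx
      obtain ⟨hxS, hxs⟩ := mem_filter.mp hx
      exact mem_filter.mpr ⟨hxS, mem_biUnion.mpr ⟨f x, hxs, mem_image_of_mem g
        (mem_filter.mpr ⟨hxS, rfl⟩)⟩⟩
    have := card_le_card hsub
    rw [card_filter_mem_eq_mul hf, card_filter_mem_eq_mul hg] at this
    exact Nat.le_of_mul_le_mul_right this k.succ_pos
  obtain ⟨c, hc_inj, hc⟩ := (all_card_le_biUnion_card_iff_exists_injective t).mp hall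
  have hp : ∀ w, ∃ x ∈ S, f x = w ∧ g x = c w := by
    intro w
    obtain ⟨x, hx, hgx⟩ := mem_image.mp (hc w)
    exact ⟨x, (mem_filter.mp hx).1, (mem_filter.mp hx).2, hgx⟩
  choose p hpS hpf hpg using hp
  refine ⟨univ.image p, ?_, card_filter_image_eq_one ?_, card_filter_image_eq_one ?_⟩
  · exact image_subset_iff.mpr fun w _ => hpS w
  · rw [show f ∘ p = id from funext hpf]
    exact Function.bijective_id
  · rw [show g ∘ p = c from funext hpg]
    exact Finite.injective_iff_bijective.mp hc_inj

lemma injOn_ite_of_injOn_sdiff [DecidableEq X] {S T : Finset X} {f : X → W} {r : X → ℕ} {k : ℕ}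
    (hT : ∀ w, #{x ∈ T | f x = w} ≤ 1) (hr : ∀ x ∈ S \ T, r x < k)
    (hinj : Set.InjOn (fun x => (r x, f x)) ↑(S \ T)) :
    Set.InjOn (fun x => (if x ∈ T then k else r x, f x)) ↑S := by
  intro x hx y hy hxy
  simp only [Prod.mk.injEq] at hxy
  obtain ⟨hr_eq, hf_eq⟩ := hxy
  have hxS : x ∈ S := hx
  have hyS : y ∈ S := hy
  by_cases hxT : x ∈ T <;> by_cases hyT : y ∈ T <;> simp only [hxT, hyT, if_true, if_false] at hr_eq
  · exact card_le_one.mp (hT (f x)) x (mem_filter.mpr ⟨hxT, rfl⟩) y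
      (mem_filter.mpr ⟨hyT, hf_eq.symm⟩)
  · exact absurd hr_eq.symm (hr y (mem_sdiff.mpr ⟨hyS, hyT⟩)).ne
  · exact absurd hr_eq (hr x (mem_sdiff.mpr ⟨hxS, hxT⟩)).ne
  · exact hinj (by simp [hxS, hxT]) (by simp [hyS, hyT]) (Prod.ext hr_eq hf_eq)

/-- König's edge colouring theorem for the multigraph of `exists_perfect_matching`. -/
theorem exists_edge_colouring [DecidableEq X] [Fintype W] (k : ℕ) {S : Finset X} {f g : X → W}
    (hf : ∀ w, #{x ∈ S | f x = w} = k) (hg : ∀ w, #{x ∈ S | g x = w} = k) :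
    ∃ r : X → ℕ, (∀ x ∈ S, r x < k) ∧ Set.InjOn (fun x => (r x, f x)) ↑S ∧
      Set.InjOn (fun x => (r x, g x)) ↑S := by
  induction k generalizing S with
  | zero =>
    have hS : ∀ x ∈ S, False := fun x hx =>
      (card_pos.mpr ⟨x, mem_filter.mpr ⟨hx, rfl⟩⟩ : 0 < #{y ∈ S | f y = f x}).ne' (hf (f x))
    exact ⟨0, fun x hx => (hS x hx).elim, fun x hx => (hS x hx).elim,
      fun x hx => (hS x hx).elim⟩
  | succ k ih =>
    obtain ⟨T, hTS, hTf, hTg⟩ := exists_perfect_matching hf hg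
    obtain ⟨r, hr, hrf, hrg⟩ := ih (S := S \ T)
      (fun w => by rw [card_filter_sdiff hTS, hf, hTf]; rfl)
      (fun w => by rw [card_filter_sdiff hTS, hg, hTg]; rfl)
    refine ⟨fun x => if x ∈ T then k else r x, fun x hx => ?_,
      injOn_ite_of_injOn_sdiff (fun w => (hTf w).le) hr hrf,
      injOn_ite_of_injOn_sdiff (fun w => (hTg w).le) hr hrg⟩
    dsimp only
    split_ifs with hxT
    · exact k.lt_succ_self
    · exact (hr x (mem_sdiff.mpr ⟨hx, hxT⟩)).trans k.lt_succ_self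

theorem exists_injective_prod_mk [Fintype X] [Fintype W] {K : Type*} [Fintype K] {f g : X → W}
    (hf : ∀ w, #{x | f x = w} = Fintype.card K) (hg : ∀ w, #{x | g x = w} = Fintype.card K) :
    ∃ ρ : X → K, Function.Injective (fun x => (ρ x, f x)) ∧
      Function.Injective (fun x => (ρ x, g x)) := by
  classical
  obtain ⟨r, hr, hrf, hrg⟩ := exists_edge_colouring _ hf hg
  let e := (Fintype.equivFin K).symm
  let ρ : X → K := fun x => e ⟨r x, hr x (mem_univ x)⟩
  have hρ : ∀ {x y}, ρ x = ρ y → r x = r y := fun h => congrArg Fin.val (e.injective h)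
  refine ⟨ρ, fun x y hxy => ?_, fun x y hxy => ?_⟩
  · obtain ⟨hρxy, hfxy⟩ := Prod.mk.inj hxy
    exact hrf (mem_univ x) (mem_univ y) (Prod.ext (hρ hρxy) hfxy)
  · obtain ⟨hρxy, hgxy⟩ := Prod.mk.inj hxy
    exact hrg (mem_univ x) (mem_univ y) (Prod.ext (hρ hρxy) hgxy)

end EdgeColouring

namespace Equiv.Perm

variable {α β : Type*}

theorem exists_colRowCol_factorization [Fintype α] [Fintype β] (σ : Perm (α × β)) :
    ∃ σ₁ σ₂ σ₁' : Perm (α × β),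
      (∀ x, (σ₁ x).2 = x.2) ∧ (∀ x, (σ₁' x).2 = x.2) ∧ (∀ x, (σ₂ x).1 = x.1) ∧
      σ = σ₁ * σ₂ * σ₁' := by
  classical
  have hcard : ∀ b : β, #{x : α × β | x.2 = b} = Fintype.card α := by
    intro b
    rw [show ({x : α × β | x.2 = b} : Finset _) = univ ×ˢ {b} by ext ⟨a, c⟩; simp [eq_comm],
      card_product, card_singleton, mul_one, card_univ]
  have hcard_σ : ∀ b : β, #{x | (σ x).2 = b} = Fintype.card α := by
    intro b
    rw [← hcard b]
    exact card_bij (fun x _ => σ x) (by simp) (fun _ _ _ _ h => σ.injective h)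
      (fun y hy => ⟨σ.symm y, by simpa using hy, σ.apply_symm_apply y⟩)
  obtain ⟨ρ, hρ, hρσ⟩ := exists_injective_prod_mk hcard hcard_σ
  let e₁ : Perm (α × β) := ofBijective _ (Finite.injective_iff_bijective.mp hρ)
  let e₂ : Perm (α × β) := ofBijective _ (Finite.injective_iff_bijective.mp hρσ)
  refine ⟨σ * e₂⁻¹, e₂ * e₁⁻¹, e₁, fun y => ?_, fun _ => rfl, fun y => ?_, by group⟩
  · obtain ⟨x, rfl⟩ := e₂.surjective y
    simp [e₂]
  · obtain ⟨x, rfl⟩ := e₁.surjective y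
    simp [e₁, e₂]

def prodCongrLeftHom : (β → Perm α) →* Perm (α × β) where
  toFun := prodCongrLeft
  map_one' := Equiv.ext fun _ => rfl
  map_mul' _ _ := Equiv.ext fun _ => rfl

def prodCongrRightHom : (α → Perm β) →* Perm (α × β) where
  toFun := prodCongrRight
  map_one' := Equiv.ext fun _ => rfl
  map_mul' _ _ := Equiv.ext fun _ => rfl

theorem exists_prodCongrLeft_eq {γ : Perm (α × β)} (h : ∀ x, (γ x).2 = x.2) :
    ∃ σ : β → Perm α, prodCongrLeft σ = γ := by
  have h_inv : ∀ x, (γ.symm x).2 = x.2 := fun x => by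
    simpa using (h (γ.symm x)).symm
  have h_mk : ∀ a b, ((γ (a, b)).1, b) = γ (a, b) := fun a b => Prod.ext rfl (h (a, b)).symm
  have h_mk_inv : ∀ a b, ((γ.symm (a, b)).1, b) = γ.symm (a, b) := fun a b =>
    Prod.ext rfl (h_inv (a, b)).symm
  refine ⟨fun b => ⟨fun a => (γ (a, b)).1, fun a => (γ.symm (a, b)).1, fun a => ?_, fun a => ?_⟩,
    Equiv.ext fun ⟨a, b⟩ => h_mk a b⟩
  · simp [h_mk]
  · simp [h_mk_inv]

theorem exists_prodCongrRight_eq {γ : Perm (α × β)} (h : ∀ x, (γ x).1 = x.1) :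
    ∃ σ : α → Perm β, prodCongrRight σ = γ := by
  have h_inv : ∀ x, (γ.symm x).1 = x.1 := fun x => by
    simpa using (h (γ.symm x)).symm
  have h_mk : ∀ a b, (a, (γ (a, b)).2) = γ (a, b) := fun a b => Prod.ext (h (a, b)).symm rfl
  have h_mk_inv : ∀ a b, (a, (γ.symm (a, b)).2) = γ.symm (a, b) := fun a b =>
    Prod.ext (h_inv (a, b)).symm rfl
  refine ⟨fun a => ⟨fun b => (γ (a, b)).2, fun b => (γ.symm (a, b)).2, fun b => ?_, fun b => ?_⟩,
    Equiv.ext fun ⟨a, b⟩ => h_mk a b⟩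
  · simp [h_mk]
  · simp [h_mk_inv]

end Equiv.Perm

open SimpleGraph Equiv

section Routing

variable {V : Type*} {G : SimpleGraph V}

lemma IsSimplePerm.one : IsSimplePerm G 1 := fun _ => Or.inl rfl

lemma IsSimplePerm.prodCongrLeft {W : Type*} {σ : W → Perm V} (H : SimpleGraph W)
    (h : ∀ w, IsSimplePerm G (σ w)) : IsSimplePerm (G □ H) (prodCongrLeft σ) := fun ⟨v, w⟩ =>
  (h w v).imp (fun hv => by simp [hv])
    fun ⟨hv, hadj⟩ => ⟨by simp [hv], boxProd_adj_left.mpr hadj⟩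

lemma IsSimplePerm.prodCongrRight {W : Type*} {σ : W → Perm V} (H : SimpleGraph W)
    (h : ∀ w, IsSimplePerm G (σ w)) : IsSimplePerm (H □ G) (prodCongrRight σ) := fun ⟨w, v⟩ =>
  (h w v).imp (fun hv => by simp [hv])
    fun ⟨hv, hadj⟩ => ⟨by simp [hv], boxProd_adj_right.mpr hadj⟩

variable (G) in
/-- `σ` has routing depth at most `D` on `G`. -/
def IsRoutable (D : ℕ) (σ : Perm V) : Prop :=
  ∃ l : List (Perm V), l.length ≤ D ∧ (∀ β ∈ l, IsSimplePerm G β) ∧ l.prod = σ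

lemma IsRoutable.one (D : ℕ) : IsRoutable G D 1 := ⟨[], D.zero_le, by simp, rfl⟩

lemma isRoutable_zero_iff {σ : Perm V} : IsRoutable G 0 σ ↔ σ = 1 := by
  constructor
  · rintro ⟨l, hl, -, rfl⟩
    rw [List.length_eq_zero_iff.mp (Nat.le_zero.mp hl), List.prod_nil]
  · rintro rfl
    exact .one 0

lemma isRoutable_succ_iff {D : ℕ} {σ : Perm V} :
    IsRoutable G (D + 1) σ ↔ ∃ β τ, IsSimplePerm G β ∧ IsRoutable G D τ ∧ σ = β * τ := by
  constructor
  · rintro ⟨_ | ⟨β, l⟩, hl, hβl, rfl⟩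
    · exact ⟨1, 1, .one, .one D, by simp⟩
    · simp only [List.length_cons, List.mem_cons, forall_eq_or_imp] at hl hβl
      exact ⟨β, l.prod, hβl.1, ⟨l, by omega, hβl.2, rfl⟩, List.prod_cons⟩
  · rintro ⟨β, τ, hβ, ⟨l, hl, hl_simple, rfl⟩, rfl⟩
    refine ⟨β :: l, by simpa using hl, ?_, List.prod_cons⟩
    simpa using ⟨hβ, hl_simple⟩

lemma IsRoutable.mul {D D' : ℕ} {σ τ : Perm V} (hσ : IsRoutable G D σ) (hτ : IsRoutable G D' τ) :
    IsRoutable G (D + D') (σ * τ) := by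
  obtain ⟨l, hl, hl_simple, rfl⟩ := hσ
  obtain ⟨l', hl', hl'_simple, rfl⟩ := hτ
  refine ⟨l ++ l', by simp only [List.length_append]; omega, ?_, List.prod_append⟩
  simpa only [List.mem_append, or_imp, forall_and] using ⟨hl_simple, hl'_simple⟩

/-- Routing on disjoint copies of `G` in parallel, glued together by `Φ`. -/
lemma IsRoutable.map_pi {ι X : Type*} {H : SimpleGraph X} (Φ : (ι → Perm V) →* Perm X)
    (hΦ : ∀ β, (∀ i, IsSimplePerm G (β i)) → IsSimplePerm H (Φ β)) {D : ℕ} {σ : ι → Perm V}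
    (hσ : ∀ i, IsRoutable G D (σ i)) : IsRoutable H D (Φ σ) := by
  induction D generalizing σ with
  | zero =>
    rw [show σ = 1 from funext fun i => isRoutable_zero_iff.mp (hσ i), map_one]
    exact .one 0
  | succ D ih =>
    choose β τ hβ hτ hστ using fun i => isRoutable_succ_iff.mp (hσ i)
    rw [show σ = β * τ from funext hστ, map_mul]
    exact isRoutable_succ_iff.mpr ⟨_, _, hΦ β hβ, ih hτ, rfl⟩

end Routing

section BoxProd

variable {V₁ V₂ : Type*} {G₁ : SimpleGraph V₁} {D : ℕ}

lemma CanRoute.isRoutable_boxProd_of_snd_eq (h : CanRoute G₁ D) (G₂ : SimpleGraph V₂)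
    {γ : Perm (V₁ × V₂)} (hγ : ∀ x, (γ x).2 = x.2) : IsRoutable (G₁ □ G₂) D γ := by
  obtain ⟨σ, rfl⟩ := Perm.exists_prodCongrLeft_eq hγ
  exact IsRoutable.map_pi Perm.prodCongrLeftHom (fun _ => .prodCongrLeft G₂) fun w => h (σ w)

lemma CanRoute.isRoutable_boxProd_of_fst_eq (h : CanRoute G₁ D) (G₂ : SimpleGraph V₂)
    {γ : Perm (V₂ × V₁)} (hγ : ∀ x, (γ x).1 = x.1) : IsRoutable (G₂ □ G₁) D γ := by
  obtain ⟨σ, rfl⟩ := Perm.exists_prodCongrRight_eq hγ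
  exact IsRoutable.map_pi Perm.prodCongrRightHom (fun _ => .prodCongrRight G₂) fun w => h (σ w)

end BoxProd

/-- Annexstein–Baumslag product routing. If every permutation on `G₁` can
be routed in depth `D₁` and every permutation on `G₂` in depth `D₂`, then every permutation
`α` on the Cartesian (box) product `G₁ □ G₂` can be routed in depth `2·D₁ + D₂`; moreover
`α = α₁ ∘ α₂ ∘ α₁'` where `α₁, α₁'` are column permutations (preserving the second
coordinate, acting within copies of `G₁`) and `α₂` is a row permutation (preserving the
first coordinate, acting within copies of `G₂`). -/
theorem stmt_3 {V₁ V₂ : Type*} [Fintype V₁] [Fintype V₂]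
    (G₁ : SimpleGraph V₁) (G₂ : SimpleGraph V₂) (D₁ D₂ : ℕ)
    (h₁ : CanRoute G₁ D₁) (h₂ : CanRoute G₂ D₂) :
    ∀ α : Equiv.Perm (V₁ × V₂),
      (∃ l : List (Equiv.Perm (V₁ × V₂)),
        l.length ≤ 2 * D₁ + D₂ ∧
        (∀ β ∈ l, IsSimplePerm (SimpleGraph.boxProd G₁ G₂) β) ∧ l.prod = α) ∧
      (∃ α₁ α₂ α₁' : Equiv.Perm (V₁ × V₂),
        (∀ x, (α₁ x).2 = x.2) ∧ (∀ x, (α₁' x).2 = x.2) ∧ (∀ x, (α₂ x).1 = x.1) ∧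
        α = α₁ * α₂ * α₁') := by
  intro α
  obtain ⟨α₁, α₂, α₁', hα₁, hα₁', hα₂, rfl⟩ := Perm.exists_colRowCol_factorization α
  refine ⟨?_, α₁, α₂, α₁', hα₁, hα₁', hα₂, rfl⟩
  have hroute : IsRoutable (G₁ □ G₂) (D₁ + D₂ + D₁) (α₁ * α₂ * α₁') :=
    ((h₁.isRoutable_boxProd_of_snd_eq G₂ hα₁).mul (h₂.isRoutable_boxProd_of_fst_eq G₁ hα₂)).mul
      (h₁.isRoutable_boxProd_of_snd_eq G₂ hα₁')
  rw [show 2 * D₁ + D₂ = D₁ + D₂ + D₁ by omega]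
  exact hroute
end

section
/- Every permutation α on the Cartesian product V₁ × V₂ can be written as α = α₁ ∘ α₂ ∘ α₁', where α₁ and α₁' preserve every column V₁ × {u₂} and α₂ preserves every row {v₁} × V₂. (Existence of the decomposition, independent of graph structure.) -/
/-!
View `α` as a bipartite multigraph on two copies of `V₂`: the point `x` is an edge from the
column of `x` to the column of `α x`. It is `|V₁|`-regular, so by Hall's theorem it has a perfect
matching, and removing matchings one at a time (König) colours its edges with `|V₁|` colours so
that edges sharing an endpoint get distinct colours. With colours in `V₁`, the maps
`β x = (colour x, x.2)` and `γ x = (colour x, (α x).2)` are bijections; `β` is a column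
permutation, `γ β⁻¹` keeps the colour and so is a row permutation, `α γ⁻¹` is a column
permutation, and `α = (α γ⁻¹) (γ β⁻¹) β`.
-/

open Finset Function

section EdgeColoring

variable {X Y : Type*}

theorem card_filter_mem_eq_mul_s5 [DecidableEq Y] {S : Finset X} {g : X → Y} {k : ℕ}
    (hg : ∀ c, #{x ∈ S | g x = c} = k) (T : Finset Y) :
    #{x ∈ S | g x ∈ T} = k * #T := by
  rw [card_eq_sum_card_fiberwise (s := {x ∈ S | g x ∈ T}) (f := g) (t := T)
    fun x hx => (mem_filter.mp hx).2, sum_congr rfl fun c hc => ?_, sum_const, smul_eq_mul,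
    mul_comm]
  rw [filter_filter, ← hg c]
  exact congrArg card (filter_congr fun x _ => by grind)

theorem card_filter_sdiff_eq [DecidableEq X] [DecidableEq Y] {S M : Finset X} {g : X → Y}
    {k : ℕ} (hMS : M ⊆ S) (hS : ∀ c, #{x ∈ S | g x = c} = k + 1)
    (hM : ∀ c, #{x ∈ M | g x = c} = 1) (c : Y) :
    #{x ∈ S \ M | g x = c} = k := by
  have : {x ∈ S \ M | g x = c} = {x ∈ S | g x = c} \ {x ∈ M | g x = c} := by
    ext; simp only [mem_filter, mem_sdiff]; tauto
  rw [this, card_sdiff_of_subset (filter_subset_filter _ hMS), hS, hM]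
  rfl

theorem card_filter_image_eq_one_s5 {ι : Type*} [Fintype ι] [DecidableEq X] [DecidableEq Y]
    (m : ι → X) (φ : X → Y) (h : Bijective (φ ∘ m)) (y : Y) :
    #{x ∈ univ.image m | φ x = y} = 1 := by
  obtain ⟨i, hi⟩ := h.2 y
  rw [card_eq_one]
  refine ⟨m i, ?_⟩
  ext x
  simp only [mem_filter, mem_image, mem_univ, true_and, mem_singleton]
  constructor
  · rintro ⟨⟨j, rfl⟩, hj⟩
    exact congrArg m (h.1 (hj.trans hi.symm))
  · rintro rfl
    exact ⟨⟨i, rfl⟩, hi⟩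

theorem exists_perfectMatching_of_regular [Fintype Y] [DecidableEq X] [DecidableEq Y]
    {S : Finset X} {g f : X → Y} {k : ℕ} (hk : 0 < k)
    (hg : ∀ c, #{x ∈ S | g x = c} = k) (hf : ∀ c, #{x ∈ S | f x = c} = k) :
    ∃ M ⊆ S, (∀ c, #{x ∈ M | g x = c} = 1) ∧ ∀ c, #{x ∈ M | f x = c} = 1 := by
  -- Hall's condition by double counting: the `k * #T` edges at `T` all end in its neighbourhood.
  have hall (T : Finset Y) : #T ≤ #{d | ∃ c ∈ T, ∃ x ∈ S, g x = c ∧ f x = d} := by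
    have hsub : {x ∈ S | g x ∈ T} ⊆
        {x ∈ S | f x ∈ ({d | ∃ c ∈ T, ∃ x ∈ S, g x = c ∧ f x = d} : Finset Y)} := by
      intro x hx
      simp only [mem_filter, mem_univ, true_and] at hx ⊢
      exact ⟨hx.1, g x, hx.2, x, hx.1, rfl, rfl⟩
    have := card_le_card hsub
    rw [card_filter_mem_eq_mul_s5 hg, card_filter_mem_eq_mul_s5 hf] at this
    exact Nat.le_of_mul_le_mul_left this hk
  obtain ⟨σ, hσ, hσS⟩ := (Fintype.all_card_le_filter_rel_iff_exists_injective _).mp hall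
  choose m hmS hmg hmf using hσS
  refine ⟨univ.image m, fun x hx => ?_, card_filter_image_eq_one_s5 m g ?_,
    card_filter_image_eq_one_s5 m f ?_⟩
  · obtain ⟨c, -, rfl⟩ := mem_image.mp hx
    exact hmS c
  · convert bijective_id
    exact funext hmg
  · convert Finite.injective_iff_bijective.mp hσ
    exact funext hmf

theorem injOn_extend_coloring [DecidableEq X] [DecidableEq Y] {S M : Finset X} {g : X → Y}
    {k : ℕ} (hM : ∀ c, #{x ∈ M | g x = c} ≤ 1) {κ : X → ℕ} (hκk : ∀ x ∈ S \ M, κ x < k)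
    (hκ : Set.InjOn (fun x => (g x, κ x)) ↑(S \ M)) :
    Set.InjOn (fun x => (g x, if x ∈ M then k else κ x)) S := by
  intro x hx y hy hxy
  obtain ⟨hg, hκxy⟩ := Prod.mk.inj hxy
  have hxS : x ∉ M → x ∈ S \ M := fun h => mem_sdiff.mpr ⟨hx, h⟩
  have hyS : y ∉ M → y ∈ S \ M := fun h => mem_sdiff.mpr ⟨hy, h⟩
  by_cases hxM : x ∈ M <;> by_cases hyM : y ∈ M <;>
    simp only [hxM, hyM, if_true, if_false] at hκxy
  · exact card_le_one.mp (hM (g x)) x (by simp [hxM]) y (by simp [hyM, hg])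
  · exact absurd hκxy.symm (hκk y (hyS hyM)).ne
  · exact absurd hκxy (hκk x (hxS hxM)).ne
  · exact hκ (hxS hxM) (hyS hyM) (Prod.ext hg hκxy)

/-- Colours are natural numbers below `k` rather than elements of `Fin k`, so that for `k = 0`
(where `S = ∅`) a colouring exists even if `X` is nonempty. -/
theorem exists_edgeColoring_of_regular [Fintype Y] [DecidableEq X] [DecidableEq Y]
    {g f : X → Y} : ∀ (k : ℕ) (S : Finset X),
    (∀ c, #{x ∈ S | g x = c} = k) → (∀ c, #{x ∈ S | f x = c} = k) →
    ∃ κ : X → ℕ, (∀ x ∈ S, κ x < k) ∧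
      Set.InjOn (fun x => (g x, κ x)) S ∧ Set.InjOn (fun x => (f x, κ x)) S
  | 0, S, hg, _ => by
    have hS : S = ∅ := eq_empty_of_forall_notMem fun x hx =>
      filter_eq_empty_iff.mp (card_eq_zero.mp (hg (g x))) hx rfl
    exact ⟨0, by simp [hS], by simp [hS], by simp [hS]⟩
  | k + 1, S, hg, hf => by
    obtain ⟨M, hMS, hMg, hMf⟩ := exists_perfectMatching_of_regular k.succ_pos hg hf
    obtain ⟨κ, hκk, hκg, hκf⟩ := exists_edgeColoring_of_regular k (S \ M)
      (card_filter_sdiff_eq hMS hg hMg) (card_filter_sdiff_eq hMS hf hMf)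
    refine ⟨fun x => if x ∈ M then k else κ x, fun x hx => ?_,
      injOn_extend_coloring (fun c => (hMg c).le) hκk hκg,
      injOn_extend_coloring (fun c => (hMf c).le) hκk hκf⟩
    dsimp only
    split_ifs with hxM
    · exact k.lt_succ_self
    · exact (hκk x (mem_sdiff.mpr ⟨hx, hxM⟩)).trans k.lt_succ_self

end EdgeColoring

theorem card_filter_snd_eq {V₁ V₂ : Type*} [Fintype V₁] [Fintype V₂] [DecidableEq V₂]
    (c : V₂) : #{x : V₁ × V₂ | x.2 = c} = Fintype.card V₁ := by
  rw [show ({x | x.2 = c} : Finset (V₁ × V₂)) = univ ×ˢ {c} by ext ⟨a, b⟩; simp [eq_comm],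
    card_product, card_singleton, mul_one, card_univ]

/-- Every permutation `α` on a product `V₁ × V₂` of finite sets can be
written as `α = α₁ ∘ α₂ ∘ α₁'`, where `α₁` and `α₁'` are column permutations (preserving
every column `V₁ × {u₂}`, i.e. fixing the second coordinate) and `α₂` is a row permutation
(preserving every row `{v₁} × V₂`, i.e. fixing the first coordinate). -/
theorem stmt_5 {V₁ V₂ : Type*} [Fintype V₁] [Fintype V₂] (α : Equiv.Perm (V₁ × V₂)) :
    ∃ α₁ α₂ α₁' : Equiv.Perm (V₁ × V₂),
      (∀ x, (α₁ x).2 = x.2) ∧ (∀ x, (α₁' x).2 = x.2) ∧ (∀ x, (α₂ x).1 = x.1) ∧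
      α = α₁ * α₂ * α₁' := by
  classical
  have hf (c : V₂) : #{x | (α x).2 = c} = Fintype.card V₁ :=
    (card_equiv α fun x => by simp).trans (card_filter_snd_eq c)
  obtain ⟨κ, hκk, hκg, hκf⟩ :=
    exists_edgeColoring_of_regular (g := Prod.snd) _ univ card_filter_snd_eq hf
  let colour (x : V₁ × V₂) : V₁ := (Fintype.equivFin V₁).symm ⟨κ x, hκk x (mem_univ x)⟩
  let β := Equiv.ofBijective (fun x => (colour x, x.2))
    ((Fintype.bijective_iff_injective_and_card _).mpr
      ⟨fun x y h => hκg (mem_univ x) (mem_univ y) (by simpa [colour, and_comm] using h), rfl⟩)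
  let γ := Equiv.ofBijective (fun x => (colour x, (α x).2))
    ((Fintype.bijective_iff_injective_and_card _).mpr
      ⟨fun x y h => hκf (mem_univ x) (mem_univ y) (by simpa [colour, and_comm] using h), rfl⟩)
  refine ⟨α * γ⁻¹, γ * β⁻¹, β, fun y => ?_, fun _ => rfl, fun y => ?_, by group⟩
  · exact (congrArg Prod.snd (γ.apply_symm_apply y) :)
  · exact (congrArg Prod.fst (β.apply_symm_apply y) :)
end

section
/- The concatenation of an outer [[n, k, d]] stabilizer code with an inner [[n₀, 1, d₀]] stabilizer code (replacing each of the n outer qubits by a block of the inner code) yields an [[N, K, D]] code with N = n·n₀, K = k, and distance D ≥ d·d₀. -/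
open Finset

/-- A Pauli operator on `n` qubits (up to phase), in symplectic representation: a pair of
binary vectors `(x, z)` representing `X(x)Z(z)`. -/
abbrev PauliVec (n : ℕ) := (Fin n → ZMod 2) × (Fin n → ZMod 2)

/-- The symplectic form; two Pauli operators commute iff it vanishes. -/
def symplForm {n : ℕ} (P Q : PauliVec n) : ZMod 2 :=
  ∑ i, (P.1 i * Q.2 i + P.2 i * Q.1 i)

/-- The weight of a Pauli operator: the number of qubits on which it acts nontrivially. -/
def pauliWeight {n : ℕ} (P : PauliVec n) : ℕ :=
  (univ.filter (fun i => P.1 i ≠ 0 ∨ P.2 i ≠ 0)).card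

/-- An `[[n, k, d]]` stabilizer code: an isotropic subgroup `S` of the (phaseless) Pauli
group of rank `n - k` such that every Pauli operator commuting with `S` but not in `S`
has weight at least `d`. -/
structure StabCode (n k d : ℕ) where
  S : Submodule (ZMod 2) (PauliVec n)
  isotropic : ∀ a ∈ S, ∀ b ∈ S, symplForm a b = 0
  rank_eq : Module.finrank (ZMod 2) S = n - k
  dist : ∀ P : PauliVec n, (∀ s ∈ S, symplForm P s = 0) → P ∉ S → d ≤ pauliWeight P

/-! The inner code has logical operators `X̄, Z̄` with `symplForm X̄ Z̄ = 1` which, together with its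
stabilizer `S₀`, span the centralizer of `S₀`. The concatenated stabilizer is generated by copies of
`S₀` on the blocks and by the outer stabilizers encoded blockwise through `(a, b) ↦ a X̄ + b Z̄`.
This encoding preserves the symplectic form, which gives isotropy and the rank
`n (n₀ - 1) + (n - k) = n n₀ - k`. If `P` commutes with the concatenated stabilizer but does not lie
in it, then every block of `P` commutes with `S₀`, and pairing the blocks with `Z̄` and `X̄` decodes
an outer Pauli operator that commutes with the outer stabilizer without lying in it. That operator
is nontrivial on at least `d` blocks, and each of these blocks is a nontrivial logical operator of
the inner code, of weight at least `d₀`. -/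

section Symplectic

variable {m : ℕ}

lemma symplForm_eq_dotProduct (P Q : PauliVec m) :
    symplForm P Q = P.1 ⬝ᵥ Q.2 + P.2 ⬝ᵥ Q.1 := by
  simp only [symplForm, dotProduct, sum_add_distrib]

lemma symplForm_comm (P Q : PauliVec m) : symplForm P Q = symplForm Q P := by
  simp only [symplForm_eq_dotProduct, dotProduct_comm]; ring

@[simp] lemma symplForm_self (P : PauliVec m) : symplForm P P = 0 := by
  rw [symplForm_eq_dotProduct, dotProduct_comm]; exact CharTwo.add_self_eq_zero _

@[simp] lemma symplForm_add_left (P Q R : PauliVec m) :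
    symplForm (P + Q) R = symplForm P R + symplForm Q R := by
  simp only [symplForm_eq_dotProduct, Prod.fst_add, Prod.snd_add, add_dotProduct]; ring

@[simp] lemma symplForm_smul_left (c : ZMod 2) (P Q : PauliVec m) :
    symplForm (c • P) Q = c * symplForm P Q := by
  simp only [symplForm_eq_dotProduct, Prod.smul_fst, Prod.smul_snd, smul_dotProduct, smul_eq_mul]
  ring

@[simp] lemma symplForm_add_right (P Q R : PauliVec m) :
    symplForm P (Q + R) = symplForm P Q + symplForm P R := by
  rw [symplForm_comm, symplForm_add_left, symplForm_comm Q, symplForm_comm R]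

@[simp] lemma symplForm_smul_right (c : ZMod 2) (P Q : PauliVec m) :
    symplForm P (c • Q) = c * symplForm P Q := by
  rw [symplForm_comm, symplForm_smul_left, symplForm_comm Q]

lemma eq_one_of_ne_zero_zmod_two {a : ZMod 2} (h : a ≠ 0) : a = 1 := by
  revert a h; decide

variable (m) in
def symplBilin : LinearMap.BilinForm (ZMod 2) (PauliVec m) :=
  LinearMap.mk₂ (ZMod 2) symplForm symplForm_add_left symplForm_smul_left
    symplForm_add_right symplForm_smul_right

@[simp] lemma symplBilin_apply (P Q : PauliVec m) : symplBilin m P Q = symplForm P Q := rfl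

@[simp] lemma symplForm_zero_left (Q : PauliVec m) : symplForm 0 Q = 0 :=
  LinearMap.map_zero₂ (symplBilin m) Q

@[simp] lemma symplForm_zero_right (P : PauliVec m) : symplForm P 0 = 0 :=
  (symplBilin m P).map_zero

@[simp] lemma symplForm_sub_left (P Q R : PauliVec m) :
    symplForm (P - Q) R = symplForm P R - symplForm Q R :=
  LinearMap.map_sub₂ (symplBilin m) P Q R

lemma symplBilin_isRefl : (symplBilin m).IsRefl := fun P Q h => by
  simpa [symplForm_comm Q P] using h

lemma symplBilin_nondegenerate : (symplBilin m).Nondegenerate := by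
  refine (symplBilin_isRefl.nondegenerate_iff_separatingLeft).mpr fun P hP => ?_
  ext i
  · simpa [symplForm_eq_dotProduct] using hP (0, Pi.single i 1)
  · simpa [symplForm_eq_dotProduct] using hP (Pi.single i 1, 0)

lemma finrank_pauliVec : Module.finrank (ZMod 2) (PauliVec m) = 2 * m := by
  rw [Module.finrank_prod, Module.finrank_fin_fun]; ring

end Symplectic

section Blocks

variable {n n₀ : ℕ}

def blocks : PauliVec (n * n₀) ≃ₗ[ZMod 2] (Fin n → PauliVec n₀) where
  toFun P i := (fun j => P.1 (finProdFinEquiv (i, j)), fun j => P.2 (finProdFinEquiv (i, j)))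
  invFun f := (fun m => (f (finProdFinEquiv.symm m).1).1 (finProdFinEquiv.symm m).2,
    fun m => (f (finProdFinEquiv.symm m).1).2 (finProdFinEquiv.symm m).2)
  map_add' _ _ := rfl
  map_smul' _ _ := rfl
  left_inv P := by ext m <;> simp only [Prod.mk.eta, Equiv.apply_symm_apply]
  right_inv f := by ext i j <;> simp

lemma symplForm_eq_sum_blocks (P Q : PauliVec (n * n₀)) :
    symplForm P Q = ∑ i, symplForm (blocks P i) (blocks Q i) := by
  rw [symplForm, ← finProdFinEquiv.sum_comp, Fintype.sum_prod_type]
  rfl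

lemma pauliWeight_eq_sum_blocks (P : PauliVec (n * n₀)) :
    pauliWeight P = ∑ i, pauliWeight (blocks P i) := by
  classical
  simp only [pauliWeight, card_filter]
  rw [← finProdFinEquiv.sum_comp, Fintype.sum_prod_type]
  rfl

lemma pauliWeight_mul_le_of_blocks {d₀ : ℕ} (Q : PauliVec n) (P : PauliVec (n * n₀))
    (h : ∀ i, Q.1 i ≠ 0 ∨ Q.2 i ≠ 0 → d₀ ≤ pauliWeight (blocks P i)) :
    pauliWeight Q * d₀ ≤ pauliWeight P :=
  calc pauliWeight Q * d₀
      ≤ ∑ i ∈ univ.filter (fun i => Q.1 i ≠ 0 ∨ Q.2 i ≠ 0), pauliWeight (blocks P i) := by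
        rw [← smul_eq_mul]
        exact card_nsmul_le_sum _ _ _ fun i hi => h i (mem_filter.mp hi).2
    _ ≤ ∑ i, pauliWeight (blocks P i) := sum_le_sum_of_subset (filter_subset _ _)
    _ = pauliWeight P := (pauliWeight_eq_sum_blocks P).symm

end Blocks

section LogicalPair

variable {m : ℕ}

open Module Submodule

/-- `X` and `Z` are the logical Pauli operators `X̄`, `Z̄` of a code with one logical qubit and
stabilizer `S`. -/
structure IsLogicalPair (S : Submodule (ZMod 2) (PauliVec m)) (X Z : PauliVec m) : Prop where
  orth_X : ∀ s ∈ S, symplForm s X = 0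
  orth_Z : ∀ s ∈ S, symplForm s Z = 0
  symplForm_X_Z : symplForm X Z = 1
  mem_of_orth : ∀ v, (∀ s ∈ S, symplForm v s = 0) → symplForm v X = 0 → symplForm v Z = 0 → v ∈ S

theorem exists_isLogicalPair {S : Submodule (ZMod 2) (PauliVec m)}
    (hS : ∀ a ∈ S, ∀ b ∈ S, symplForm a b = 0) (hrank : finrank (ZMod 2) S + 1 = m) :
    ∃ X Z, IsLogicalPair S X Z := by
  set B := symplBilin m
  have hdim (W : Submodule (ZMod 2) (PauliVec m)) :
      finrank (ZMod 2) (B.orthogonal W) = 2 * m - finrank (ZMod 2) W := by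
    rw [LinearMap.BilinForm.finrank_orthogonal symplBilin_nondegenerate, finrank_pauliVec]
  have hSC : S ≤ B.orthogonal S := fun v hv s hs => hS s hs v hv
  obtain ⟨X, hXC, hXS⟩ := SetLike.exists_of_lt <| hSC.lt_of_ne fun h => by
    have := hdim S; rw [← h] at this; omega
  obtain ⟨Z, hZC, hZX⟩ : ∃ Z ∈ B.orthogonal S, symplForm Z X ≠ 0 := by
    by_contra! h
    rw [← LinearMap.BilinForm.orthogonal_orthogonal symplBilin_nondegenerate symplBilin_isRefl S]
      at hXS
    exact hXS h
  have hXZ : symplForm X Z = 1 := by rw [symplForm_comm]; exact eq_one_of_ne_zero_zmod_two hZX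
  refine ⟨X, Z, hXC, hZC, hXZ, fun v hvS hvX hvZ => ?_⟩
  have hker {w : PauliVec m} (hSw : ∀ s ∈ S, symplForm s w = 0) (hX : symplForm X w = 0)
      (hZ : symplForm Z w = 0) :
      S ⊔ span (ZMod 2) {X} ⊔ span (ZMod 2) {Z} ≤ LinearMap.ker (B.flip w) :=
    sup_le (sup_le hSw (span_singleton_le_iff_mem _ _ |>.mpr hX))
      (span_singleton_le_iff_mem _ _ |>.mpr hZ)
  -- `X ∉ S` and `Z ∉ S ⊔ ⟨X⟩` as they pair nontrivially with `Z`, resp. `X`; so the orthogonal of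
  -- `S ⊔ ⟨X⟩ ⊔ ⟨Z⟩` has dimension at most `m - 1`, and it contains `S`.
  have hSX : finrank (ZMod 2) S < finrank (ZMod 2) ↥(S ⊔ span (ZMod 2) {X}) :=
    finrank_lt_finrank_of_lt <| lt_sup_iff_notMem.mpr fun hX =>
      one_ne_zero (hXZ.symm.trans (hZC X hX))
  have hSXZ : finrank (ZMod 2) ↥(S ⊔ span (ZMod 2) {X}) <
      finrank (ZMod 2) ↥(S ⊔ span (ZMod 2) {X} ⊔ span (ZMod 2) {Z}) :=
    finrank_lt_finrank_of_lt <| lt_sup_iff_notMem.mpr fun hZ =>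
      hZX <| (show S ⊔ span (ZMod 2) {X} ≤ LinearMap.ker (B.flip X) from
        sup_le hXC (span_singleton_le_iff_mem _ _ |>.mpr (symplForm_self X))) hZ
  have hWorth : B.orthogonal (S ⊔ span (ZMod 2) {X} ⊔ span (ZMod 2) {Z}) = S := by
    refine (eq_of_le_of_finrank_le (fun s hs => hker (fun s' hs' => hS s' hs' s hs)
      (symplForm_comm X s ▸ hXC s hs) (symplForm_comm Z s ▸ hZC s hs)) ?_).symm
    rw [hdim]; omega
  rw [← hWorth]
  exact hker (fun s hs => symplForm_comm v s ▸ hvS s hs)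
    (symplForm_comm v X ▸ hvX) (symplForm_comm v Z ▸ hvZ)

end LogicalPair

namespace IsLogicalPair

variable {m : ℕ} {S : Submodule (ZMod 2) (PauliVec m)} {X Z : PauliVec m}

lemma symplForm_encode_X (h : IsLogicalPair S X Z) {s : PauliVec m} (hs : s ∈ S) (a b : ZMod 2) :
    symplForm (s + a • X + b • Z) X = b := by
  simp [h.orth_X s hs, symplForm_comm Z X, h.symplForm_X_Z]

lemma symplForm_encode_Z (h : IsLogicalPair S X Z) {s : PauliVec m} (hs : s ∈ S) (a b : ZMod 2) :
    symplForm (s + a • X + b • Z) Z = a := by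
  simp [h.orth_Z s hs, h.symplForm_X_Z]

lemma sub_mem (h : IsLogicalPair S X Z) {v : PauliVec m} (hv : ∀ s ∈ S, symplForm v s = 0) :
    v - symplForm v Z • X - symplForm v X • Z ∈ S := by
  have hX (s) (hs : s ∈ S) : symplForm X s = 0 := symplForm_comm X s ▸ h.orth_X s hs
  have hZ (s) (hs : s ∈ S) : symplForm Z s = 0 := symplForm_comm Z s ▸ h.orth_Z s hs
  refine h.mem_of_orth _ (fun s hs => by simp [hv s hs, hX s hs, hZ s hs]) ?_ ?_ <;>
    simp [symplForm_comm Z X, h.symplForm_X_Z]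

end IsLogicalPair

section Concatenation

variable {n n₀ : ℕ} {Sout : Submodule (ZMod 2) (PauliVec n)}
  {Sin : Submodule (ZMod 2) (PauliVec n₀)} {X Z : PauliVec n₀} {P : PauliVec (n * n₀)}

def encodeBlocks (X Z : PauliVec n₀) : PauliVec n →ₗ[ZMod 2] (Fin n → PauliVec n₀) where
  toFun t i := t.1 i • X + t.2 i • Z
  map_add' _ _ := by ext1 i; simp only [Prod.fst_add, Prod.snd_add, Pi.add_apply, add_smul]; abel
  map_smul' _ _ := by ext1 i; simp [mul_smul]

variable (Sout Sin X Z) in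
def concatMap : (Fin n → Sin) × Sout →ₗ[ZMod 2] PauliVec (n * n₀) :=
  blocks.symm.toLinearMap ∘ₗ
    (LinearMap.piMap fun _ => Sin.subtype).coprod (encodeBlocks X Z ∘ₗ Sout.subtype)

variable (Sout Sin X Z) in
def concatStab : Submodule (ZMod 2) (PauliVec (n * n₀)) :=
  LinearMap.range (concatMap Sout Sin X Z)

/-- Since `symplForm (s + a • X + b • Z) Z = a` and `symplForm (s + a • X + b • Z) X = b`, this
reads off the outer Pauli operator carried by the blocks. -/
def decodeOuter (X Z : PauliVec n₀) (P : PauliVec (n * n₀)) : PauliVec n :=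
  (fun i => symplForm (blocks P i) Z, fun i => symplForm (blocks P i) X)

@[simp] lemma blocks_concatMap (u : (Fin n → Sin) × Sout) (i : Fin n) :
    blocks (concatMap Sout Sin X Z u) i =
      u.1 i + (u.2 : PauliVec n).1 i • X + (u.2 : PauliVec n).2 i • Z := by
  simp [concatMap, encodeBlocks, add_assoc]

@[simp] lemma decodeOuter_zero : decodeOuter X Z (0 : PauliVec (n * n₀)) = 0 := by
  ext i <;> simp [decodeOuter]

lemma symplForm_concatMap (P : PauliVec (n * n₀)) (u : (Fin n → Sin) × Sout) :
    symplForm P (concatMap Sout Sin X Z u) =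
      ∑ i, symplForm (blocks P i) (u.1 i) + symplForm (decodeOuter X Z P) u.2 := by
  rw [symplForm_eq_sum_blocks, symplForm, ← sum_add_distrib]
  refine sum_congr rfl fun i _ => ?_
  simp only [blocks_concatMap, decodeOuter, symplForm_add_right, symplForm_smul_right]
  ring

lemma decodeOuter_concatMap (h : IsLogicalPair Sin X Z) (u : (Fin n → Sin) × Sout) :
    decodeOuter X Z (concatMap Sout Sin X Z u) = u.2 := by
  ext i
  · simp only [decodeOuter, blocks_concatMap, h.symplForm_encode_Z (u.1 i).2]
  · simp only [decodeOuter, blocks_concatMap, h.symplForm_encode_X (u.1 i).2]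

lemma concatMap_injective (h : IsLogicalPair Sin X Z) :
    Function.Injective (concatMap Sout Sin X Z) := by
  rw [← LinearMap.ker_eq_bot, LinearMap.ker_eq_bot']
  rintro ⟨f, t⟩ hu
  obtain rfl : t = 0 := Subtype.ext <| by simpa [hu] using (decodeOuter_concatMap h (f, t)).symm
  refine Prod.ext (funext fun i => Subtype.ext ?_) rfl
  simpa using congrArg (blocks · i) hu

lemma symplForm_concatMap_concatMap (h : IsLogicalPair Sin X Z)
    (hSin : ∀ a ∈ Sin, ∀ b ∈ Sin, symplForm a b = 0) (u v : (Fin n → Sin) × Sout) :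
    symplForm (concatMap Sout Sin X Z u) (concatMap Sout Sin X Z v) =
      symplForm (u.2 : PauliVec n) v.2 := by
  rw [symplForm_concatMap, decodeOuter_concatMap h, sum_eq_zero, zero_add]
  intro i _
  simp [hSin _ (u.1 i).2 _ (v.1 i).2, symplForm_comm X, symplForm_comm Z, h.orth_X _ (v.1 i).2,
    h.orth_Z _ (v.1 i).2]

lemma finrank_concatStab (h : IsLogicalPair Sin X Z) :
    Module.finrank (ZMod 2) (concatStab Sout Sin X Z) =
      n * Module.finrank (ZMod 2) Sin + Module.finrank (ZMod 2) Sout := by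
  rw [concatStab, LinearMap.finrank_range_of_inj (concatMap_injective h), Module.finrank_prod,
    Module.finrank_pi_fintype, sum_const, card_univ, Fintype.card_fin, smul_eq_mul]

lemma symplForm_blocks_eq_zero_of_orth
    (hP : ∀ Q ∈ concatStab Sout Sin X Z, symplForm P Q = 0) (i : Fin n) :
    ∀ s ∈ Sin, symplForm (blocks P i) s = 0 := by
  intro s hs
  have := hP _ ⟨(Pi.single i ⟨s, hs⟩, 0), rfl⟩
  rw [symplForm_concatMap, sum_eq_single i (fun j _ hj => by simp [hj]) (by simp)] at this
  simpa using this

lemma symplForm_decodeOuter_eq_zero_of_orth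
    (hP : ∀ Q ∈ concatStab Sout Sin X Z, symplForm P Q = 0) {t : PauliVec n} (ht : t ∈ Sout) :
    symplForm (decodeOuter X Z P) t = 0 := by
  simpa [symplForm_concatMap] using hP _ ⟨(0, ⟨t, ht⟩), rfl⟩

lemma mem_concatStab_of_decodeOuter_mem (h : IsLogicalPair Sin X Z)
    (hblk : ∀ i, ∀ s ∈ Sin, symplForm (blocks P i) s = 0) (hout : decodeOuter X Z P ∈ Sout) :
    P ∈ concatStab Sout Sin X Z :=
  ⟨(fun i => ⟨_, h.sub_mem (hblk i)⟩, ⟨_, hout⟩),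
    blocks.injective <| funext fun i => by simp only [blocks_concatMap, decodeOuter]; abel⟩

theorem le_pauliWeight_of_orth_concatStab {k d d₀ : ℕ} (Qout : StabCode n k d)
    (Qin : StabCode n₀ 1 d₀) (h : IsLogicalPair Qin.S X Z)
    (hP : ∀ Q ∈ concatStab Qout.S Qin.S X Z, symplForm P Q = 0)
    (hPS : P ∉ concatStab Qout.S Qin.S X Z) : d * d₀ ≤ pauliWeight P := by
  have hblk := symplForm_blocks_eq_zero_of_orth hP
  have hout : decodeOuter X Z P ∉ Qout.S := fun hout =>
    hPS (mem_concatStab_of_decodeOuter_mem h hblk hout)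
  have hd : d ≤ pauliWeight (decodeOuter X Z P) :=
    Qout.dist _ (fun _ => symplForm_decodeOuter_eq_zero_of_orth hP) hout
  have hd₀ (i) (hi : (decodeOuter X Z P).1 i ≠ 0 ∨ (decodeOuter X Z P).2 i ≠ 0) :
      d₀ ≤ pauliWeight (blocks P i) :=
    Qin.dist _ (hblk i) fun hmem => hi.elim (· (h.orth_Z _ hmem)) (· (h.orth_X _ hmem))
  calc d * d₀ ≤ pauliWeight (decodeOuter X Z P) * d₀ := Nat.mul_le_mul_right _ hd
    _ ≤ pauliWeight P := pauliWeight_mul_le_of_blocks _ _ hd₀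

end Concatenation

def StabCode.concat {n k d n₀ d₀ : ℕ} (Qout : StabCode n k d) (Qin : StabCode n₀ 1 d₀)
    {X Z : PauliVec n₀} (h : IsLogicalPair Qin.S X Z) (hk : k ≤ n) (hn₀ : 1 ≤ n₀) :
    StabCode (n * n₀) k (d * d₀) where
  S := concatStab Qout.S Qin.S X Z
  isotropic := by
    rintro _ ⟨u, rfl⟩ _ ⟨v, rfl⟩
    rw [symplForm_concatMap_concatMap h Qin.isotropic]
    exact Qout.isotropic _ u.2.2 _ v.2.2
  rank_eq := by
    rw [finrank_concatStab h, Qin.rank_eq, Qout.rank_eq, Nat.mul_sub_one]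
    have := Nat.le_mul_of_pos_right n hn₀
    omega
  dist _ := le_pauliWeight_of_orth_concatStab Qout Qin h

/-- Concatenating an outer `[[n, k, d]]` stabilizer code with an inner
`[[n₀, 1, d₀]]` stabilizer code (replacing each of the `n` outer qubits by a block of the
inner code) yields an `[[N, K, D]]` code with `N = n·n₀`, `K = k` and distance
`D ≥ d·d₀`. -/
theorem stmt_10 (n k d n₀ d₀ : ℕ) (hk : k ≤ n) (hn₀ : 1 ≤ n₀)
    (Qout : StabCode n k d) (Qin : StabCode n₀ 1 d₀) :
    Nonempty (StabCode (n * n₀) k (d * d₀)) := by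
  obtain ⟨X, Z, h⟩ := exists_isLogicalPair Qin.isotropic (by rw [Qin.rank_eq]; omega)
  exact ⟨Qout.concat Qin h hk hn₀⟩
end

section
/- Suppose the hierarchical code is formed by concatenating an outer [[n, ρn, Θ(n^δ)]] LDPC code with an inner surface code of linear size ℓ = Θ(log n), so that N = Θ(n·log²n). Then the number of encoded qubits satisfies K = Ω(N / log²N) and the distance satisfies D = Ω(N^δ / log^{2δ−1}(N/log N)), for δ ≥ 1/2. -/
/-! With `L = log n` we have `ℓ ≍ L` and `N = n ℓ²`, so `log N ≥ L` and `N ≲ n L²`, which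
gives `N / log² N ≲ n ≍ K`. Moreover `log N = L + 2 log ℓ ≤ ℓ²` once `ℓ` is large, so
`N / log N ≥ n`; hence `N^δ / log^{2δ-1}(N / log N) ≲ (n L²)^δ / L^{2δ-1} = n^δ L ≍ d ℓ = D`,
where `δ ≥ 1/2` makes the power of the logarithm monotone. -/

open Filter Real

namespace HierarchicalCode

variable {x ℓ b : ℝ}

lemma log_le_log_mul_sq (hx : 0 < x) (hℓ : 1 ≤ ℓ) : log x ≤ log (x * ℓ ^ 2) :=
  log_le_log hx (le_mul_of_one_le_right hx.le (one_le_pow₀ hℓ))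

lemma div_log_mul_sq_sq_le (hx : 1 < x) (hℓ1 : 1 ≤ ℓ) (hℓ : ℓ ≤ b * log x) :
    x * ℓ ^ 2 / log (x * ℓ ^ 2) ^ 2 ≤ b ^ 2 * x := by
  have hL : 0 < log x := log_pos hx
  calc x * ℓ ^ 2 / log (x * ℓ ^ 2) ^ 2
      ≤ x * ℓ ^ 2 / log x ^ 2 := by
        gcongr _ / ?_ ^ 2
        exact log_le_log_mul_sq (by linarith) hℓ1
    _ ≤ x * (b * log x) ^ 2 / log x ^ 2 := by
        gcongr
    _ = b ^ 2 * x := by field_simp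

lemma log_mul_sq_le_sq (hx : 0 < x) (hℓ : 4 ≤ ℓ) (hL : 2 * log x ≤ ℓ ^ 2) :
    log (x * ℓ ^ 2) ≤ ℓ ^ 2 := by
  have hℓ' : log ℓ ≤ ℓ := (log_le_sub_one_of_pos (by linarith)).trans (by linarith)
  rw [log_mul hx.ne' (by positivity), log_pow]
  push_cast
  nlinarith

lemma le_div_log_mul_sq (hx : 1 < x) (hℓ : 4 ≤ ℓ) (hL : 2 * log x ≤ ℓ ^ 2) :
    x ≤ x * ℓ ^ 2 / log (x * ℓ ^ 2) := by
  have hlogN : 0 < log (x * ℓ ^ 2) :=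
    (log_pos hx).trans_le (log_le_log_mul_sq (by linarith) (by linarith))
  rw [le_div_iff₀ hlogN]
  gcongr
  exact log_mul_sq_le_sq (by linarith) hℓ hL

lemma rpow_two_mul_div_rpow_two_mul_sub_one {L : ℝ} (δ : ℝ) (hb : 0 ≤ b) (hL : 0 < L) :
    (b * L) ^ (2 * δ) / L ^ (2 * δ - 1) = b ^ (2 * δ) * L := by
  rw [mul_rpow hb hL.le, mul_div_assoc, ← rpow_sub hL]
  norm_num

lemma rpow_div_log_div_log_rpow_le {δ : ℝ} (hδ : 1 / 2 ≤ δ) (hx : 1 < x) (hℓ1 : 1 ≤ ℓ)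
    (hℓ : ℓ ≤ b * log x) (hxN : x ≤ x * ℓ ^ 2 / log (x * ℓ ^ 2)) :
    (x * ℓ ^ 2) ^ δ / log (x * ℓ ^ 2 / log (x * ℓ ^ 2)) ^ (2 * δ - 1)
      ≤ x ^ δ * (b ^ (2 * δ) * log x) := by
  have hx0 : 0 < x := by linarith
  have hL : 0 < log x := log_pos hx
  have hb : 0 ≤ b := nonneg_of_mul_nonneg_left (by linarith) hL
  calc (x * ℓ ^ 2) ^ δ / log (x * ℓ ^ 2 / log (x * ℓ ^ 2)) ^ (2 * δ - 1)
      ≤ (x * (b * log x) ^ 2) ^ δ / log x ^ (2 * δ - 1) := by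
        gcongr
        linarith
    _ = x ^ δ * ((b * log x) ^ (2 * δ) / log x ^ (2 * δ - 1)) := by
        rw [mul_rpow hx0.le (by positivity), mul_div_assoc, ← rpow_natCast,
          ← rpow_mul (by positivity)]
        ring_nf
    _ = x ^ δ * (b ^ (2 * δ) * log x) := by
        rw [rpow_two_mul_div_rpow_two_mul_sub_one δ hb hL]

lemma eventually_four_le_and_two_mul_log_le_sq {ι : Type*} {l : Filter ι} {n ℓ : ι → ℝ}
    {a : ℝ} (ha : 0 < a) (hn : Tendsto n l atTop) (hℓ : ∀ᶠ t in l, a * log (n t) ≤ ℓ t) :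
    ∀ᶠ t in l, 4 ≤ ℓ t ∧ 2 * log (n t) ≤ ℓ t ^ 2 := by
  have haL : Tendsto (fun t ↦ a * log (n t)) l atTop :=
    (tendsto_log_atTop.comp hn).const_mul_atTop ha
  filter_upwards [haL.eventually_ge_atTop 4, haL.eventually_ge_atTop (2 / a), hℓ]
    with t h4 h2 hℓt
  rw [div_le_iff₀' ha] at h2
  exact ⟨h4.trans hℓt, by nlinarith⟩

end HierarchicalCode

open HierarchicalCode

theorem stmt_11_general (ρ δ : ℝ) (hρ : 0 < ρ) (hδ : 1 / 2 ≤ δ)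
    (n d ℓ N K D : ℕ → ℝ)
    (hn : Tendsto n atTop atTop)
    (hK : ∀ t, K t = ρ * n t)
    (hd : ∃ c₁ c₂ : ℝ, 0 < c₁ ∧ ∀ᶠ t in atTop, c₁ * n t ^ δ ≤ d t ∧ d t ≤ c₂ * n t ^ δ)
    (hl : ∃ c₁ c₂ : ℝ, 0 < c₁ ∧
      ∀ᶠ t in atTop, c₁ * Real.log (n t) ≤ ℓ t ∧ ℓ t ≤ c₂ * Real.log (n t))
    (hN : ∀ t, N t = n t * ℓ t ^ 2)
    (hD : ∀ t, D t = d t * ℓ t) :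
    (∃ c : ℝ, 0 < c ∧ ∀ᶠ t in atTop, c * (N t / Real.log (N t) ^ 2) ≤ K t) ∧
    (∃ c : ℝ, 0 < c ∧ ∀ᶠ t in atTop,
      c * (N t ^ δ / Real.log (N t / Real.log (N t)) ^ (2 * δ - 1)) ≤ D t) := by
  obtain ⟨c₁, _, hc₁, hdE⟩ := hd
  obtain ⟨a, a', ha, hlE⟩ := hl
  set b := max a' a
  have hb : 0 < b := lt_max_of_lt_right ha
  have hℓb : ∀ᶠ t in atTop, ℓ t ≤ b * log (n t) := by
    filter_upwards [hlE, hn.eventually_ge_atTop 1] with t hlt hx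
    exact hlt.2.trans (mul_le_mul_of_nonneg_right (le_max_left _ _) (log_nonneg hx))
  have hℓ := eventually_four_le_and_two_mul_log_le_sq ha hn (hlE.mono fun _ h ↦ h.1)
  refine ⟨⟨ρ / b ^ 2, by positivity, ?_⟩, ⟨c₁ * a / b ^ (2 * δ), by positivity, ?_⟩⟩ <;>
    filter_upwards [hn.eventually_gt_atTop 1, hℓ, hdE, hlE, hℓb]
      with t hx ⟨hℓ4, hℓ2⟩ ⟨hdt, _⟩ ⟨hℓa, _⟩ hℓb <;> rw [hN]
  · calc _ ≤ ρ / b ^ 2 * (b ^ 2 * n t) := by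
          gcongr
          exact div_log_mul_sq_sq_le hx (by linarith) hℓb
      _ = K t := by rw [hK]; field_simp
  · calc _ ≤ c₁ * a / b ^ (2 * δ) * (n t ^ δ * (b ^ (2 * δ) * log (n t))) := by
          gcongr
          exact rpow_div_log_div_log_rpow_le hδ hx (by linarith) hℓb
            (le_div_log_mul_sq hx hℓ4 hℓ2)
      _ = c₁ * n t ^ δ * (a * log (n t)) := by field_simp
      _ ≤ D t := by
          rw [hD]
          exact mul_le_mul hdt hℓa (mul_nonneg ha.le (log_nonneg hx.le))
            ((by positivity : (0 : ℝ) ≤ c₁ * n t ^ δ).trans hdt)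

/-- If the hierarchical code is formed by concatenating an outer
`[[n, ρn, Θ(n^δ)]]` LDPC code with an inner surface code of linear size `ℓ = Θ(log n)`,
so that `N = n·ℓ²`, `K = ρn`, `D = d·ℓ`, then `K = Ω(N / log²N)` and
`D = Ω(N^δ / log^{2δ−1}(N / log N))`, for `1/2 ≤ δ ≤ 1`. -/
theorem stmt_11 (ρ δ : ℝ) (hρ : 0 < ρ) (hδ : 1 / 2 ≤ δ) (hδ1 : δ ≤ 1)
    (n d ℓ N K D : ℕ → ℝ)
    (hn : Tendsto n atTop atTop)
    (hK : ∀ t, K t = ρ * n t)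
    (hd : ∃ c₁ c₂ : ℝ, 0 < c₁ ∧ ∀ᶠ t in atTop, c₁ * n t ^ δ ≤ d t ∧ d t ≤ c₂ * n t ^ δ)
    (hl : ∃ c₁ c₂ : ℝ, 0 < c₁ ∧
      ∀ᶠ t in atTop, c₁ * Real.log (n t) ≤ ℓ t ∧ ℓ t ≤ c₂ * Real.log (n t))
    (hN : ∀ t, N t = n t * ℓ t ^ 2)
    (hD : ∀ t, D t = d t * ℓ t) :
    (∃ c : ℝ, 0 < c ∧ ∀ᶠ t in atTop, c * (N t / Real.log (N t) ^ 2) ≤ K t) ∧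
    (∃ c : ℝ, 0 < c ∧ ∀ᶠ t in atTop,
      c * (N t ^ δ / Real.log (N t / Real.log (N t)) ^ (2 * δ - 1)) ≤ D t) :=
  stmt_11_general ρ δ hρ hδ n d ℓ N K D hn hK hd hl hN hD
end

section
/- In a syndrome-extraction circuit for an LDPC code with qubit degree and generator degree both at most Δ and depth D, where per-time-step errors on data and ancilla qubits are independent locally decaying with rate √p_phys, and errors propagate through CNOT layers via the sparse parity-check matrix H_X (row and column weight at most Δ), the final joint error distribution on data and ancilla qubits is locally decaying with rate at most 2^{Δ+1} · D · p_phys^{1/(2(Δ+1))}. -/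
/-!
A distribution of errors is locally decaying with rate `r` if every fixed set `S` of qubits lies
in the error support with probability at most `r ^ |S|`. Both steps of the propagation argument
are union bounds over "witness selectors". Propagating through a matrix whose rows and columns
have weight at most `k` charges every output qubit to one of at most `k` input qubits, and every
input qubit is charged at most `k` times; so a selector pins at least `|S| / k` input qubits, and
there are at most `k ^ |S|` selectors, which turns the rate `q ^ k` into `k * q`. Taking the
union over `D` independent time steps charges every qubit to one time step; a selector splits `S`
into disjoint parts, one per step, and independence multiplies their bounds, which turns the rate
`r` into `D * r`. With `√p = q ^ (Δ + 1)` for `q = p ^ (1 / (2 (Δ + 1)))` this gives the rate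
`D (Δ + 1) q ≤ 2 ^ (Δ + 1) D q`.
-/

open Finset
open scoped Matrix

/-- The support of a binary vector: the set of its nonzero coordinates. -/
def fsupp {Q : Type*} [Fintype Q] [DecidableEq Q] (v : Q → ZMod 2) : Finset Q :=
  univ.filter (fun x => v x ≠ 0)

theorem Finset.sum_le_card_mul_of_forall_exists_mem {ι α : Type*} [Fintype ι] {s : Finset α}
    {A : ι → Finset α} {f : α → ℝ} {c : ℝ} (hf : ∀ a, 0 ≤ f a) (hs : ∀ a ∈ s, ∃ i, a ∈ A i)
    (hA : ∀ i, ∑ a ∈ A i, f a ≤ c) :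
    ∑ a ∈ s, f a ≤ Fintype.card ι * c := by
  classical
  have hcover : s ⊆ (univ.sigma A).image Sigma.snd := fun a ha => by
    obtain ⟨i, hi⟩ := hs a ha
    exact mem_image.2 ⟨⟨i, a⟩, mem_sigma.2 ⟨mem_univ i, hi⟩, rfl⟩
  calc ∑ a ∈ s, f a ≤ ∑ a ∈ (univ.sigma A).image Sigma.snd, f a :=
        sum_le_sum_of_subset_of_nonneg hcover fun a _ _ => hf a
    _ ≤ ∑ x ∈ univ.sigma A, f x.2 := sum_image_le_of_nonneg fun a _ => hf a
    _ = ∑ i, ∑ a ∈ A i, f a := sum_sigma _ _ _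
    _ ≤ ∑ _i : ι, c := sum_le_sum fun i _ => hA i
    _ = Fintype.card ι * c := by rw [sum_const, card_univ, nsmul_eq_mul]

namespace Matrix

variable {l m n o α : Type*} [Zero α] [DecidableEq α]

def rowWeight [Fintype n] (A : Matrix m n α) (i : m) : ℕ :=
  (univ.filter fun j => A i j ≠ 0).card

theorem rowWeight_fromBlocks_inl [Fintype l] [Fintype n] (A : Matrix m l α) (B : Matrix m n α)
    (C : Matrix o l α) (D : Matrix o n α) (i : m) :
    (fromBlocks A B C D).rowWeight (Sum.inl i) = A.rowWeight i + B.rowWeight i := by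
  rw [rowWeight, rowWeight, rowWeight, ← card_disjSum]
  congr 1
  ext (j | j) <;> simp

theorem rowWeight_fromBlocks_inr [Fintype l] [Fintype n] (A : Matrix o l α) (B : Matrix o n α)
    (C : Matrix m l α) (D : Matrix m n α) (i : m) :
    (fromBlocks A B C D).rowWeight (Sum.inr i) = C.rowWeight i + D.rowWeight i := by
  rw [rowWeight, rowWeight, rowWeight, ← card_disjSum]
  congr 1
  ext (j | j) <;> simp

theorem rowWeight_one [Fintype n] [DecidableEq n] [One α] [NeZero (1 : α)] (i : n) :
    (1 : Matrix n n α).rowWeight i = 1 := by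
  simp [rowWeight, one_apply, filter_eq]

theorem rowWeight_zero [Fintype n] (i : m) : (0 : Matrix m n α).rowWeight i = 0 := by
  simp [rowWeight]

theorem rowWeight_fromBlocks_one_one_le [Fintype m] [Fintype n] [DecidableEq m] [DecidableEq n]
    [One α] [NeZero (1 : α)] {B : Matrix m n α} {C : Matrix n m α} {k : ℕ}
    (hB : ∀ i, B.rowWeight i ≤ k) (hC : ∀ i, C.rowWeight i ≤ k) :
    ∀ i, (fromBlocks 1 B C 1).rowWeight i ≤ k + 1 := by
  rintro (i | i)
  · rw [rowWeight_fromBlocks_inl, rowWeight_one, add_comm]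
    exact Nat.add_le_add_right (hB i) 1
  · rw [rowWeight_fromBlocks_inr, rowWeight_one]
    exact Nat.add_le_add_right (hC i) 1

end Matrix

theorem Matrix.fromBlocks_one_zero_one_mulVec_sum_elim {m n α : Type*} [Fintype m] [Fintype n]
    [DecidableEq m] [DecidableEq n] [NonAssocSemiring α] (H : Matrix n m α) (b : m → α)
    (c : n → α) :
    fromBlocks 1 0 H 1 *ᵥ Sum.elim b c = Sum.elim b (c + H *ᵥ b) := by
  rw [fromBlocks_mulVec, Sum.elim_comp_inl, Sum.elim_comp_inr, one_mulVec, one_mulVec,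
    zero_mulVec, add_zero, add_comm]

section LocallyDecaying

variable {Ω V W : Type*} [Fintype Ω] [DecidableEq V] [DecidableEq W]

def IsLocallyDecaying (μ : Ω → ℝ) (supp : Ω → Finset V) (r : ℝ) : Prop :=
  ∀ S : Finset V, ∑ ω ∈ univ.filter (fun ω => S ⊆ supp ω), μ ω ≤ r ^ S.card

namespace IsLocallyDecaying

variable {μ : Ω → ℝ} {supp : Ω → Finset V} {r : ℝ}

theorem sum_le_one (h : IsLocallyDecaying μ supp r) : ∑ ω, μ ω ≤ 1 := by
  simpa using h ∅

theorem mono {r' : ℝ} (h : IsLocallyDecaying μ supp r) (hr : 0 ≤ r) (hrr' : r ≤ r') :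
    IsLocallyDecaying μ supp r' := fun S =>
  (h S).trans (pow_le_pow_left₀ hr hrr' _)

theorem of_forall_exists_mem [Fintype W] {supp' : Ω → Finset W} {q : ℝ} {k : ℕ}
    (R : W → Finset V) (hR : ∀ w, (R w).card ≤ k)
    (hRfiber : ∀ v, (univ.filter fun w => v ∈ R w).card ≤ k)
    (hcover : ∀ ω, ∀ w ∈ supp' ω, ∃ v ∈ R w, v ∈ supp ω)
    (hμ : ∀ ω, 0 ≤ μ ω) (hq : 0 ≤ q) (h : IsLocallyDecaying μ supp (q ^ k)) :
    IsLocallyDecaying μ supp' (k * q) := by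
  intro S
  let T (σ : (w : S) → R w) : Finset V := univ.image fun w => (σ w : V)
  have hselect : ∀ σ : (w : S) → R w,
      ∑ ω ∈ univ.filter (fun ω => T σ ⊆ supp ω), μ ω ≤ q ^ S.card := by
    intro σ
    rcases le_total q 1 with hq1 | hq1
    · have hcard : S.card ≤ k * (T σ).card := by
        have hfiber : ∀ v ∈ T σ, (univ.filter fun w : S => (σ w : V) = v).card ≤ k := by
          intro v _
          refine (card_le_card_of_injOn Subtype.val (fun w hw => ?_)
            Subtype.val_injective.injOn).trans (hRfiber v)
          obtain rfl := (mem_filter.1 hw).2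
          simp
        have := card_le_mul_card_image (univ : Finset S) k hfiber
        rwa [card_univ, Fintype.card_coe] at this
      calc _ ≤ (q ^ k) ^ (T σ).card := h _
        _ = q ^ (k * (T σ).card) := (pow_mul _ _ _).symm
        _ ≤ q ^ S.card := pow_le_pow_of_le_one hq hq1 hcard
    · calc _ ≤ ∑ ω, μ ω := sum_le_sum_of_subset_of_nonneg (subset_univ _) fun ω _ _ => hμ ω
        _ ≤ 1 := h.sum_le_one
        _ ≤ q ^ S.card := one_le_pow₀ hq1
  have hcover' : ∀ ω ∈ univ.filter (fun ω => S ⊆ supp' ω),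
      ∃ σ : (w : S) → R w, ω ∈ univ.filter (fun ω => T σ ⊆ supp ω) := by
    intro ω hω
    have hω' : ∀ w : S, ∃ v : R w, (v : V) ∈ supp ω := fun w => by
      obtain ⟨v, hv, hvω⟩ := hcover ω w ((mem_filter.1 hω).2 w.2)
      exact ⟨⟨v, hv⟩, hvω⟩
    choose σ hσ using hω'
    refine ⟨σ, mem_filter.2 ⟨mem_univ ω, fun v hv => ?_⟩⟩
    obtain ⟨w, -, rfl⟩ := mem_image.1 hv
    exact hσ w
  have hselectors : (Fintype.card ((w : S) → R w) : ℝ) ≤ (k : ℝ) ^ S.card := by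
    rw [Fintype.card_pi]
    exact_mod_cast (prod_le_pow_card _ _ _ fun w _ => by simpa using hR w).trans_eq (by simp)
  calc _ ≤ Fintype.card ((w : S) → R w) * q ^ S.card :=
        sum_le_card_mul_of_forall_exists_mem hμ hcover' hselect
    _ ≤ (k : ℝ) ^ S.card * q ^ S.card := by gcongr
    _ = (k * q) ^ S.card := (mul_pow _ _ _).symm

theorem mulVec [Fintype V] [Fintype W] {x : Ω → V → ZMod 2} {q : ℝ} {k : ℕ}
    (A : Matrix W V (ZMod 2)) (hrow : ∀ w, A.rowWeight w ≤ k) (hcol : ∀ v, Aᵀ.rowWeight v ≤ k)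
    (hμ : ∀ ω, 0 ≤ μ ω) (hq : 0 ≤ q) (h : IsLocallyDecaying μ (fun ω => fsupp (x ω)) (q ^ k)) :
    IsLocallyDecaying μ (fun ω => fsupp (A *ᵥ x ω)) (k * q) := by
  refine h.of_forall_exists_mem (fun w => univ.filter fun v => A w v ≠ 0) hrow
    (fun v => (card_le_card fun w hw =>
      mem_filter.2 ⟨mem_univ w, (mem_filter.1 (mem_filter.1 hw).2).2⟩).trans (hcol v))
    (fun ω w hw => ?_) hμ hq
  obtain ⟨v, -, hv⟩ := exists_ne_zero_of_sum_ne_zero (mem_filter.1 hw).2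
  obtain ⟨hAv, hxv⟩ := mul_ne_zero_iff.1 hv
  exact ⟨v, mem_filter.2 ⟨mem_univ v, hAv⟩, mem_filter.2 ⟨mem_univ v, hxv⟩⟩

theorem sum_elim_add_mulVec [Fintype V] [Fintype W] {μ : (V → ZMod 2) × (W → ZMod 2) → ℝ}
    {q : ℝ} {k : ℕ} (H : Matrix W V (ZMod 2)) (hrow : ∀ i, H.rowWeight i ≤ k)
    (hcol : ∀ j, Hᵀ.rowWeight j ≤ k) (hμ : ∀ e, 0 ≤ μ e) (hq : 0 ≤ q)
    (h : IsLocallyDecaying μ (fun e => fsupp (Sum.elim e.1 e.2)) (q ^ (k + 1))) :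
    IsLocallyDecaying μ (fun e => fsupp (Sum.elim e.1 (e.2 + H *ᵥ e.1))) ((k + 1 : ℕ) * q) := by
  set A : Matrix (V ⊕ W) (V ⊕ W) (ZMod 2) := Matrix.fromBlocks 1 0 H 1 with hA
  have hrows : ∀ i, A.rowWeight i ≤ k + 1 :=
    Matrix.rowWeight_fromBlocks_one_one_le (fun i => (Matrix.rowWeight_zero i).trans_le k.zero_le)
      hrow
  have hcols : ∀ i, Aᵀ.rowWeight i ≤ k + 1 := by
    simpa only [hA, Matrix.fromBlocks_transpose, Matrix.transpose_one, Matrix.transpose_zero] using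
      Matrix.rowWeight_fromBlocks_one_one_le hcol
        (fun i => (Matrix.rowWeight_zero i).trans_le k.zero_le)
  simpa only [hA, Matrix.fromBlocks_one_zero_one_mulVec_sum_elim] using
    IsLocallyDecaying.mulVec (x := fun e : (V → ZMod 2) × (W → ZMod 2) => Sum.elim e.1 e.2)
      (k := k + 1) A hrows hcols hμ hq h

theorem pi {ι : Type*} [Fintype ι] [DecidableEq ι] {ν : ι → Ω → ℝ} (hν : ∀ t ω, 0 ≤ ν t ω)
    (h : ∀ t, IsLocallyDecaying (ν t) supp r) :
    IsLocallyDecaying (fun E : ι → Ω => ∏ t, ν t (E t))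
      (fun E => univ.biUnion fun t => supp (E t)) (Fintype.card ι * r) := by
  intro S
  let T (τ : S → ι) (t : ι) : Finset V := (univ.filter fun v : S => τ v = t).map (.subtype _)
  have hselect : ∀ τ : S → ι,
      ∑ E ∈ Fintype.piFinset (fun t => univ.filter fun ω => T τ t ⊆ supp ω), ∏ t, ν t (E t)
        ≤ r ^ S.card := by
    intro τ
    have hcard : ∑ t, (T τ t).card = S.card := by
      simp only [T, card_map]
      rw [← card_eq_sum_card_fiberwise fun _ _ => mem_univ _, card_univ, Fintype.card_coe]
    rw [← prod_univ_sum, ← hcard, ← prod_pow_eq_pow_sum]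
    exact prod_le_prod (fun t _ => sum_nonneg fun ω _ => hν t ω) fun t _ => h t (T τ t)
  have hcover : ∀ E ∈ univ.filter (fun E : ι → Ω => S ⊆ univ.biUnion fun t => supp (E t)),
      ∃ τ : S → ι, E ∈ Fintype.piFinset (fun t => univ.filter fun ω => T τ t ⊆ supp ω) := by
    intro E hE
    have hE' : ∀ v : S, ∃ t, (v : V) ∈ supp (E t) := fun v => by
      simpa using (mem_filter.1 hE).2 v.2
    choose τ hτ using hE'
    refine ⟨τ, Fintype.mem_piFinset.2 fun t => mem_filter.2 ⟨mem_univ _, fun v hv => ?_⟩⟩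
    obtain ⟨v, hvt, rfl⟩ := mem_map.1 hv
    obtain rfl := (mem_filter.1 hvt).2
    exact hτ v
  calc _ ≤ Fintype.card (S → ι) * r ^ S.card :=
        sum_le_card_mul_of_forall_exists_mem (fun E => prod_nonneg fun t _ => hν t (E t))
          hcover hselect
    _ = (Fintype.card ι * r) ^ S.card := by simp [mul_pow]

end IsLocallyDecaying

end LocallyDecaying

theorem stmt_16_general (n m Δ D : ℕ)
    (p : ℝ) (hp : 0 ≤ p)
    (H : Matrix (Fin m) (Fin n) (ZMod 2))
    (hrow : ∀ i, (univ.filter (fun j => H i j ≠ 0)).card ≤ Δ)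
    (hcol : ∀ j, (univ.filter (fun i => H i j ≠ 0)).card ≤ Δ)
    (ν : Fin D → ((Fin n → ZMod 2) × (Fin m → ZMod 2)) → ℝ)
    (hν : ∀ t e, 0 ≤ ν t e)
    (hld : ∀ t, ∀ S : Finset (Fin n ⊕ Fin m),
      ∑ e ∈ univ.filter
          (fun e : (Fin n → ZMod 2) × (Fin m → ZMod 2) => S ⊆ fsupp (Sum.elim e.1 e.2)),
        ν t e ≤ Real.sqrt p ^ S.card) :
    ∀ S : Finset (Fin n ⊕ Fin m),
      ∑ E ∈ univ.filter
          (fun E : Fin D → (Fin n → ZMod 2) × (Fin m → ZMod 2) =>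
            S ⊆ univ.biUnion (fun t =>
              fsupp (Sum.elim (E t).1 (fun i => (E t).2 i + H.mulVec (E t).1 i)))),
        ∏ t, ν t (E t)
      ≤ ((2 : ℝ) ^ (Δ + 1) * (D : ℝ) * p ^ (1 / (2 * (Δ + 1) : ℝ))) ^ S.card := by
  set q : ℝ := p ^ (1 / (2 * (Δ + 1) : ℝ))
  have hq : 0 ≤ q := by positivity
  have hsqrt : Real.sqrt p = q ^ (Δ + 1) := by
    rw [Real.sqrt_eq_rpow, ← Real.rpow_natCast, ← Real.rpow_mul hp]
    congr 1
    push_cast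
    field_simp
  have hpropagated (t : Fin D) :=
    (hsqrt ▸ hld t : IsLocallyDecaying (ν t) _ (q ^ (Δ + 1))).sum_elim_add_mulVec H hrow hcol
      (hν t) hq
  have hrate : (Fintype.card (Fin D) * ((Δ + 1 : ℕ) * q) : ℝ) ≤ 2 ^ (Δ + 1) * D * q := by
    have hpow : ((Δ + 1 : ℕ) : ℝ) ≤ 2 ^ (Δ + 1) := by exact_mod_cast Nat.lt_two_pow_self.le
    calc _ = ((Δ + 1 : ℕ) : ℝ) * D * q := by rw [Fintype.card_fin]; ring
      _ ≤ 2 ^ (Δ + 1) * D * q := by gcongr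
  exact (IsLocallyDecaying.pi hν hpropagated).mono (by positivity) hrate

/-- In a syndrome-extraction circuit for an LDPC code with qubit and
generator degrees at most `Δ` and depth `D`, per-time-step errors `(b^{(t)}, c^{(t)})` on
data and ancilla qubits are independent and locally decaying with rate `√p`, and errors
propagate through the CNOT layers via the sparse parity-check matrix `H` (row and column
weight at most `Δ`): the final error support is contained in the union over `t` of the
supports of `(I 0; H I)·(b^{(t)}; c^{(t)})`. Then the induced final joint error
distribution on data and ancilla qubits is locally decaying with rate
`2^{Δ+1} · D · p^{1/(2(Δ+1))}`. -/
theorem stmt_16 (n m Δ D : ℕ) (hΔ : 0 < Δ) (hD : 0 < D)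
    (p : ℝ) (hp : 0 ≤ p) (hp1 : p ≤ 1)
    (H : Matrix (Fin m) (Fin n) (ZMod 2))
    (hrow : ∀ i, (univ.filter (fun j => H i j ≠ 0)).card ≤ Δ)
    (hcol : ∀ j, (univ.filter (fun i => H i j ≠ 0)).card ≤ Δ)
    (ν : Fin D → ((Fin n → ZMod 2) × (Fin m → ZMod 2)) → ℝ)
    (hν : ∀ t e, 0 ≤ ν t e) (hνsum : ∀ t, ∑ e, ν t e = 1)
    (hld : ∀ t, ∀ S : Finset (Fin n ⊕ Fin m),
      ∑ e ∈ univ.filter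
          (fun e : (Fin n → ZMod 2) × (Fin m → ZMod 2) => S ⊆ fsupp (Sum.elim e.1 e.2)),
        ν t e ≤ Real.sqrt p ^ S.card) :
    ∀ S : Finset (Fin n ⊕ Fin m),
      ∑ E ∈ univ.filter
          (fun E : Fin D → (Fin n → ZMod 2) × (Fin m → ZMod 2) =>
            S ⊆ univ.biUnion (fun t =>
              fsupp (Sum.elim (E t).1 (fun i => (E t).2 i + H.mulVec (E t).1 i)))),
        ∏ t, ν t (E t)
      ≤ ((2 : ℝ) ^ (Δ + 1) * (D : ℝ) * p ^ (1 / (2 * (Δ + 1) : ℝ))) ^ S.card :=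
  stmt_16_general n m Δ D p hp H hrow hcol ν hν hld
end
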